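/- arXiv:1903.05895 — 7 statements merged into one kernel-verified Lean document; each statement's English description precedes it below -/
import Mathlib

section
/- Let m ≥ 1 and N = 2m. Let F_N ∈ ℂ^{N×N} be the DFT matrix with entries (F_N)_{k,n} = exp(−2πi·k·n/N), let F_m ∈ ℂ^{m×m} be the DFT matrix of size m, let Ω ∈ ℂ^{m×m} be the diagonal matrix with diagonal entries Ω_{k,k} = exp(−2πi·k/N) for 0 ≤ k < m, and let P_N ∈ ℂ^{N×N} be the permutation matrix with (P_N x)_k = x_{2k} and (P_N x)_{m+k} = x_{2k+1} for 0 ≤ k < m. Then F_N equals the block matrix product [[I_m, Ω],[I_m, −Ω]] · [[F_m, 0],[0, F_m]] · P_N. -/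
open Complex

/-- The DFT matrix of size `n`, with entries `exp(−2πi·k·j/n)`. -/
noncomputable def dftMatrix (n : ℕ) : Matrix (Fin n) (Fin n) ℂ :=
  Matrix.of fun k j => Complex.exp (-2 * Real.pi * Complex.I * (k : ℕ) * (j : ℕ) / n)

/-- The standard identification `Fin m ⊕ Fin m ≃ Fin (2m)`. -/
def sumEquiv (m : ℕ) : Fin m ⊕ Fin m ≃ Fin (2 * m) :=
  finSumFinEquiv.trans (finCongr (two_mul m).symm)

/-!
With `ζ = exp(−2πi/2m)`, split the rows of `F_{2m} = (ζ^{kn})` into the halves `k` and `m + k` and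
its columns into the even and odd indices `2j`, `2j + 1`. Since `ζ²` is the root defining `F_m`,
the upper even block is `F_m` and the upper odd block is `Ω F_m` with `Ω = diag(ζ^k)`; passing to
the lower half multiplies the entries by `ζ^{2mj} = 1` and `ζ^{m(2j+1)} = −1` respectively.
The argument needs nothing about `ζ` beyond `ζ^m = −1`, so the factorization holds for any such
`ζ` in a commutative ring.
-/

open Matrix

section PowMatrix

variable {R : Type*} [CommRing R]

def powMatrix (ζ : R) (n : ℕ) : Matrix (Fin n) (Fin n) R :=
  of fun k j => ζ ^ ((k : ℕ) * j)

def evenOddEquiv (m : ℕ) : Fin m ⊕ Fin m ≃ Fin (2 * m) where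
  toFun := Sum.elim (fun a => ⟨2 * a, by omega⟩) (fun a => ⟨2 * a + 1, by omega⟩)
  invFun j :=
    if (j : ℕ) % 2 = 0 then .inl ⟨j / 2, by omega⟩ else .inr ⟨j / 2, by omega⟩
  left_inv := by
    rintro (a | a) <;> simp [Fin.ext_iff]
    omega
  right_inv j := by
    by_cases h : (j : ℕ) % 2 = 0 <;> simp [h, Fin.ext_iff] <;> omega

@[simp] lemma sumEquiv_inl_val (m : ℕ) (a : Fin m) : (sumEquiv m (.inl a) : ℕ) = a := rfl
@[simp] lemma sumEquiv_inr_val (m : ℕ) (a : Fin m) : (sumEquiv m (.inr a) : ℕ) = m + a := rfl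
@[simp] lemma evenOddEquiv_inl_val (m : ℕ) (a : Fin m) :
    (evenOddEquiv m (.inl a) : ℕ) = 2 * a := rfl
@[simp] lemma evenOddEquiv_inr_val (m : ℕ) (a : Fin m) :
    (evenOddEquiv m (.inr a) : ℕ) = 2 * a + 1 := rfl

lemma pow_add_mul_of_pow_eq_neg_one {ζ : R} {m : ℕ} (hζ : ζ ^ m = -1) (r j : ℕ) :
    ζ ^ ((m + r) * j) = (-1) ^ j * ζ ^ (r * j) := by
  rw [← hζ, ← pow_mul, ← pow_add]
  ring_nf

theorem powMatrix_submatrix_sumEquiv_evenOddEquiv {ζ : R} {m : ℕ} (hζ : ζ ^ m = -1) :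
    (powMatrix ζ (2 * m)).submatrix (sumEquiv m) (evenOddEquiv m) =
      fromBlocks
        (powMatrix (ζ ^ 2) m) (diagonal (fun k : Fin m => ζ ^ (k : ℕ)) * powMatrix (ζ ^ 2) m)
        (powMatrix (ζ ^ 2) m)
        (-(diagonal (fun k : Fin m => ζ ^ (k : ℕ)) * powMatrix (ζ ^ 2) m)) := by
  ext (r | r) (a | a) <;>
    simp only [powMatrix, submatrix_apply, of_apply, fromBlocks_apply₁₁, fromBlocks_apply₁₂,
      fromBlocks_apply₂₁, fromBlocks_apply₂₂, diagonal_mul, Matrix.neg_apply, sumEquiv_inl_val,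
      sumEquiv_inr_val, evenOddEquiv_inl_val, evenOddEquiv_inr_val]
  · ring
  · ring
  · rw [pow_add_mul_of_pow_eq_neg_one hζ, (even_two_mul _).neg_one_pow]
    ring
  · rw [pow_add_mul_of_pow_eq_neg_one hζ, (odd_two_mul_add_one _).neg_one_pow]
    ring

lemma evenOddPermMatrix_eq_toPEquiv_toMatrix (m : ℕ) :
    (of fun i j : Fin (2 * m) =>
      if (j : ℕ) = (if (i : ℕ) < m then 2 * (i : ℕ) else 2 * ((i : ℕ) - m) + 1)
      then (1 : R) else 0) = ((sumEquiv m).symm.trans (evenOddEquiv m)).toPEquiv.toMatrix := by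
  ext i j
  obtain ⟨s, rfl⟩ := (sumEquiv m).surjective i
  rcases s with a | a <;> simp [PEquiv.toMatrix_apply, Fin.ext_iff, eq_comm]

theorem powMatrix_two_mul_eq_butterfly {ζ : R} {m : ℕ} (hζ : ζ ^ m = -1) :
    powMatrix ζ (2 * m) =
      reindex (sumEquiv m) (sumEquiv m)
          (fromBlocks 1 (diagonal fun k : Fin m => ζ ^ (k : ℕ))
            1 (-(diagonal fun k : Fin m => ζ ^ (k : ℕ)))) *
        reindex (sumEquiv m) (sumEquiv m)
          (fromBlocks (powMatrix (ζ ^ 2) m) 0 0 (powMatrix (ζ ^ 2) m)) *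
        (of fun i j : Fin (2 * m) =>
          if (j : ℕ) = (if (i : ℕ) < m then 2 * (i : ℕ) else 2 * ((i : ℕ) - m) + 1)
          then (1 : R) else 0) := by
  rw [evenOddPermMatrix_eq_toPEquiv_toMatrix, PEquiv.mul_toMatrix_toPEquiv, reindex_apply,
    reindex_apply, submatrix_mul_equiv, fromBlocks_multiply]
  simp only [Matrix.one_mul, Matrix.mul_zero, add_zero, zero_add, Matrix.neg_mul]
  rw [← powMatrix_submatrix_sumEquiv_evenOddEquiv hζ, submatrix_submatrix]
  ext i j
  simp

end PowMatrix

lemma exp_neg_two_pi_I_div_pow (z : ℂ) (k : ℕ) :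
    exp (-2 * Real.pi * I / z) ^ k = exp (-2 * Real.pi * I * k / z) := by
  rw [← exp_nat_mul]
  ring_nf

lemma dftMatrix_eq_powMatrix (n : ℕ) :
    dftMatrix n = powMatrix (exp (-2 * Real.pi * I / n)) n := by
  ext k j
  rw [powMatrix, of_apply, exp_neg_two_pi_I_div_pow, dftMatrix, of_apply]
  push_cast
  ring_nf

/-- **One step of the FFT factorization.**  For `N = 2m`,
`F_N = [[I, Ω],[I, −Ω]] · diag(F_m, F_m) · P_N`, where `Ω` is the diagonal matrix of twiddle
factors and `P_N` is the even–odd separation permutation matrix. -/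
theorem dft_butterfly_step (m : ℕ) (hm : 1 ≤ m) :
    dftMatrix (2 * m) =
      (Matrix.reindex (sumEquiv m) (sumEquiv m)
          (Matrix.fromBlocks 1
            (Matrix.diagonal fun k : Fin m =>
              Complex.exp (-2 * Real.pi * Complex.I * (k : ℕ) / (2 * m)))
            1
            (-(Matrix.diagonal fun k : Fin m =>
              Complex.exp (-2 * Real.pi * Complex.I * (k : ℕ) / (2 * m)))))) *
        (Matrix.reindex (sumEquiv m) (sumEquiv m)
          (Matrix.fromBlocks (dftMatrix m) 0 0 (dftMatrix m))) *
        (Matrix.of fun i j : Fin (2 * m) =>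
          if (j : ℕ) = (if (i : ℕ) < m then 2 * (i : ℕ) else 2 * ((i : ℕ) - m) + 1)
          then (1 : ℂ) else 0) := by
  have hm' : (m : ℂ) ≠ 0 := by exact_mod_cast (by omega : m ≠ 0)
  have half_turn : exp (-2 * Real.pi * I / (2 * m)) ^ m = -1 := by
    rw [exp_neg_two_pi_I_div_pow, ← exp_neg_pi_mul_I]
    congr 1
    field_simp
  have square : exp (-2 * Real.pi * I / (2 * m)) ^ 2 = exp (-2 * Real.pi * I / m) := by
    rw [exp_neg_two_pi_I_div_pow]
    congr 1
    push_cast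
    field_simp
  rw [dftMatrix_eq_powMatrix, dftMatrix_eq_powMatrix, ← square]
  push_cast
  simp only [← exp_neg_two_pi_I_div_pow]
  exact powMatrix_two_mul_eq_butterfly half_turn
end

section
/- Let m ≥ 1 and N = 2m. For x ∈ ℝ^N, define v ∈ ℝ^N by v_n = x_{2n} and v_{N−1−n} = x_{2n+1} for 0 ≤ n < m (the even–odd separation with the odd indices reversed). Then for every 0 ≤ k < N, the DCT coefficient satisfies Σ_{n=0}^{N−1} x_n · cos(π·(n+1/2)·k/N) = Re( exp(−iπk/(2N)) · Σ_{n=0}^{N−1} v_n · exp(−2πi·n·k/N) ). In other words, the DCT of x equals the real part of a diagonal rescaling of the DFT of the permuted vector v. -/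
/-!
Multiplying the `n`-th DFT term by the twiddle factor `exp(−iπk/(2N))` gives a term whose real
part is `v_n cos(π(2n + 1/2)k/N)`. Now `v_n = x_{σ n}` for the permutation `σ` with
`σ n = 2n` on the first half and `σ n = 2(N − 1 − n) + 1` on the second. On the first half
`σ n + 1/2 = 2n + 1/2`; on the second `σ n + 1/2 = 2N − (2n + 1/2)`, and `cos(π(2N − a)k/N)`
equals `cos(πak/N)` by evenness and `2π`-periodicity. So the DCT sum is the real part
reindexed by `σ`.
-/

open Complex in
theorem re_exp_mul_ofReal_mul_exp_dft (N n k : ℕ) (a : ℝ) :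
    (exp (-I * Real.pi * k / (2 * N)) * ((a : ℂ) * exp (-2 * Real.pi * I * n * k / N))).re =
      a * Real.cos (Real.pi * (2 * n + 1 / 2) * k / N) := by
  have hexp : exp (-I * Real.pi * k / (2 * N)) * ((a : ℂ) * exp (-2 * Real.pi * I * n * k / N)) =
      a * exp (↑(-(Real.pi * (2 * n + 1 / 2) * k / N)) * I) := by
    rw [mul_left_comm, ← exp_add]
    congr 2
    push_cast
    ring
  rw [hexp, re_ofReal_mul, exp_ofReal_mul_I_re, Real.cos_neg]

theorem Real.cos_pi_mul_two_mul_sub_mul_div {N : ℝ} (hN : N ≠ 0) (a : ℝ) (k : ℕ) :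
    Real.cos (Real.pi * (2 * N - a) * k / N) = Real.cos (Real.pi * a * k / N) := by
  have hphase : Real.pi * (2 * N - a) * k / N = k * (2 * Real.pi) - Real.pi * a * k / N := by
    field_simp
  rw [hphase, Real.cos_nat_mul_two_pi_sub]

/-- The index of `x` stored at position `n` by the even–odd separation with the odd indices
reversed. -/
def evenOddRev (m : ℕ) (n : Fin (2 * m)) : Fin (2 * m) :=
  if h : (n : ℕ) < m then ⟨2 * n, by omega⟩ else ⟨2 * (2 * m - 1 - n) + 1, by omega⟩

theorem evenOddRev_bijective (m : ℕ) : Function.Bijective (evenOddRev m) := by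
  refine Finite.injective_iff_bijective.mp fun a b hab => Fin.ext ?_
  unfold evenOddRev at hab
  split_ifs at hab <;> simp only [Fin.mk.injEq] at hab <;> omega

theorem apply_eq_apply_evenOddRev {m : ℕ} {x v : Fin (2 * m) → ℝ}
    (hv : ∀ n : Fin m,
      v ⟨n, by omega⟩ = x ⟨2 * n, by omega⟩ ∧
        v ⟨2 * m - 1 - n, by omega⟩ = x ⟨2 * n + 1, by omega⟩)
    (n : Fin (2 * m)) : v n = x (evenOddRev m n) := by
  unfold evenOddRev
  split_ifs with h
  · exact (hv ⟨n, h⟩).1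
  · have hn : n = ⟨2 * m - 1 - (2 * m - 1 - n), by omega⟩ := Fin.ext (by simp only; omega)
    conv_lhs => rw [hn]
    exact (hv ⟨2 * m - 1 - n, by omega⟩).2

theorem cos_evenOddRev (m k : ℕ) (n : Fin (2 * m)) :
    Real.cos (Real.pi * ((evenOddRev m n : ℕ) + 1 / 2) * k / (2 * m : ℕ)) =
      Real.cos (Real.pi * (2 * n + 1 / 2) * k / (2 * m : ℕ)) := by
  unfold evenOddRev
  split_ifs with h
  · push_cast
    rfl
  · have hm : ((2 * m : ℕ) : ℝ) ≠ 0 := by norm_cast; omega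
    have hidx : ((2 * (2 * m - 1 - n) + 1 : ℕ) : ℝ) + 1 / 2 = 2 * (2 * m : ℕ) - (2 * n + 1 / 2) := by
      rw [Nat.cast_add, Nat.cast_mul, Nat.cast_sub (by omega), Nat.cast_sub (by omega)]
      push_cast
      ring
    rw [hidx, Real.cos_pi_mul_two_mul_sub_mul_div hm]

/-- **The DCT as the real part of a rescaled DFT of a permuted vector.**
Let `N = 2m` and let `v` be obtained from `x ∈ ℝ^N` by even–odd separation with the odd
indices reversed: `v_n = x_{2n}` and `v_{N−1−n} = x_{2n+1}` for `0 ≤ n < m`.  Then for every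
`0 ≤ k < N`,
`Σ_n x_n cos(π(n+1/2)k/N) = Re( exp(−iπk/(2N)) · Σ_n v_n exp(−2πi·n·k/N) )`. -/
theorem dct_eq_re_scaled_dft (m : ℕ) (N : ℕ) (hN : N = 2 * m)
    (x v : Fin N → ℝ)
    (hv : ∀ n : Fin m,
      v ⟨(n : ℕ), by have := n.isLt; omega⟩ = x ⟨2 * (n : ℕ), by have := n.isLt; omega⟩ ∧
      v ⟨N - 1 - (n : ℕ), by have := n.isLt; omega⟩ =
        x ⟨2 * (n : ℕ) + 1, by have := n.isLt; omega⟩)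
    (k : ℕ) :
    ∑ n : Fin N, x n * Real.cos (Real.pi * ((n : ℕ) + 1 / 2) * k / N) =
      (Complex.exp (-Complex.I * Real.pi * k / (2 * N)) *
        ∑ n : Fin N, (v n : ℂ) *
          Complex.exp (-2 * Real.pi * Complex.I * (n : ℕ) * k / N)).re := by
  subst hN
  rw [Finset.mul_sum, Complex.re_sum,
    ← (Equiv.ofBijective _ (evenOddRev_bijective m)).sum_comp]
  refine Finset.sum_congr rfl fun n _ => ?_
  rw [re_exp_mul_ofReal_mul_exp_dft, apply_eq_apply_evenOddRev hv, Equiv.ofBijective_apply,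
    cos_evenOddRev]
end

section
/- Let m ≥ 1 and N = 2^m, and let F_N ∈ ℂ^{N×N} be the DFT matrix with entries (F_N)_{k,n} = exp(−2πi·k·n/N). Then there exist matrices M_0, M_1, …, M_{m−1} ∈ ℂ^{N×N}, where each M_k is a butterfly factor at level k (i.e., (M_k)_{i,j} = 0 whenever i ≠ j and the bitwise XOR of i and j is not equal to 2^{m−1−k}), and a permutation σ of Fin N with permutation matrix P_σ, such that F_N = M_0 · M_1 ⋯ M_{m−1} · P_σ. That is, the DFT matrix lies in the class BP. -/
namespace DftBPAux

open Finset

lemma tpp (n : ℕ) : 0 < (2:ℕ) ^ n := Nat.two_pow_pos n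

/-! ### Bit helpers -/

def bitv (n b : ℕ) : ℕ := (n.testBit b).toNat

lemma testBit_eq_of_mod_eq {a b p : ℕ} (h : a % 2 ^ p = b % 2 ^ p) {i : ℕ} (hi : i < p) :
    a.testBit i = b.testBit i := by
  have ha := Nat.testBit_mod_two_pow a p i
  have hb := Nat.testBit_mod_two_pow b p i
  rw [h, hb] at ha
  simpa [hi] using ha.symm

lemma mod_eq_of_testBit {a b p : ℕ} (h : ∀ i < p, a.testBit i = b.testBit i) :
    a % 2 ^ p = b % 2 ^ p := by
  apply Nat.eq_of_testBit_eq
  intro i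
  rw [Nat.testBit_mod_two_pow, Nat.testBit_mod_two_pow]
  by_cases hi : i < p
  · simp [hi, h i hi]
  · simp [hi]

lemma testBit_eq_of_div_eq {a b p : ℕ} (h : a / 2 ^ p = b / 2 ^ p) {i : ℕ} (hi : p ≤ i) :
    a.testBit i = b.testBit i := by
  have ha : a.testBit i = (a >>> p).testBit (i - p) := by
    rw [Nat.testBit_shiftRight]; congr 1; omega
  have hb : b.testBit i = (b >>> p).testBit (i - p) := by
    rw [Nat.testBit_shiftRight]; congr 1; omega
  rw [ha, hb, Nat.shiftRight_eq_div_pow, Nat.shiftRight_eq_div_pow, h]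

lemma xor_testBit_eq {l j p : ℕ} (h : l ^^^ j = 0 ∨ l ^^^ j = 2 ^ p) {i : ℕ} (hi : i ≠ p) :
    l.testBit i = j.testBit i := by
  have hx : (l ^^^ j).testBit i = false := by
    rcases h with h | h <;> rw [h]
    · simp
    · exact Nat.testBit_two_pow_of_ne (Ne.symm hi)
  rw [Nat.testBit_xor] at hx
  rcases Bool.eq_or_eq_not (l.testBit i) (j.testBit i) with h' | h'
  · exact h'
  · rw [h'] at hx; cases j.testBit i <;> simp at hx

lemma xor_eq_of_testBit {l j p : ℕ} (h : ∀ i, i ≠ p → l.testBit i = j.testBit i) :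
    l ^^^ j = 0 ∨ l ^^^ j = 2 ^ p := by
  by_cases hp : l.testBit p = j.testBit p
  · left
    have : l = j := Nat.eq_of_testBit_eq fun i => by
      by_cases hip : i = p
      · rw [hip]; exact hp
      · exact h i hip
    simp [this]
  · right
    apply Nat.eq_of_testBit_eq
    intro i
    rw [Nat.testBit_xor]
    by_cases hip : i = p
    · subst hip
      rw [Nat.testBit_two_pow_self]
      rcases Bool.eq_or_eq_not (l.testBit i) (j.testBit i) with h' | h'
      · exact absurd h' hp
      · rw [h']; cases j.testBit i <;> simp
    · rw [h i hip, Nat.testBit_two_pow_of_ne (Ne.symm hip)]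
      cases j.testBit i <;> simp

lemma sum_bitv (m : ℕ) : ∀ n < 2 ^ m, ∑ s ∈ range m, bitv n s * 2 ^ s = n := by
  induction m with
  | zero => intro n hn; interval_cases n; simp
  | succ m ih =>
    intro n hn
    rw [Finset.sum_range_succ']
    have h1 : ∀ s, bitv n (s + 1) = bitv (n / 2) s := by
      intro s; unfold bitv; rw [Nat.testBit_add_one]
    have h0 : bitv n 0 * 2 ^ 0 = n % 2 := by
      unfold bitv; rw [Nat.testBit_zero]
      by_cases h : n % 2 = 1 <;> simp [h] <;> omega
    have hdiv : n / 2 < 2 ^ m := by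
      have : n < 2 ^ m * 2 := by rw [← pow_succ]; exact hn
      omega
    have hrec := ih (n / 2) hdiv
    calc ∑ s ∈ range m, bitv n (s + 1) * 2 ^ (s + 1) + bitv n 0 * 2 ^ 0
        = (∑ s ∈ range m, bitv (n / 2) s * 2 ^ s) * 2 + n % 2 := by
          rw [Finset.sum_mul, h0]
          congr 1
          apply Finset.sum_congr rfl
          intro s _
          rw [h1 s, pow_succ]; ring
      _ = n := by rw [hrec]; omega

/-! ### Bit reversal -/

def revNat : ℕ → ℕ → ℕ
  | 0, _ => 0
  | m + 1, n => n % 2 * 2 ^ m + revNat m (n / 2)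

lemma revNat_lt (m : ℕ) : ∀ n, revNat m n < 2 ^ m := by
  induction m with
  | zero => intro n; simp [revNat]
  | succ m ih =>
    intro n
    show n % 2 * 2 ^ m + revNat m (n / 2) < 2 ^ (m + 1)
    have h1 := ih (n / 2)
    have h2 : n % 2 ≤ 1 := by omega
    rw [pow_succ]
    nlinarith

lemma testBit_revNat (m : ℕ) : ∀ n, ∀ c < m, (revNat m n).testBit c = n.testBit (m - 1 - c) := by
  induction m with
  | zero => intro n c hc; omega
  | succ m ih =>
    intro n c hc
    show (n % 2 * 2 ^ m + revNat m (n / 2)).testBit c = _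
    have hr : revNat m (n / 2) < 2 ^ m := revNat_lt _ _
    by_cases hcm : c = m
    · rw [hcm]
      have hd : (n % 2 * 2 ^ m + revNat m (n / 2)) / 2 ^ m = n % 2 := by
        rw [Nat.add_comm, Nat.add_mul_div_right _ _ (tpp m), Nat.div_eq_of_lt hr, Nat.zero_add]
      rw [Nat.testBit_eq_decide_div_mod_eq, hd]
      have h0 : m + 1 - 1 - m = 0 := by omega
      rw [h0, Nat.testBit_zero]
      have : n % 2 % 2 = n % 2 := by omega
      rw [this]
    · have hclt : c < m := by omega
      have key : (n % 2 * 2 ^ m + revNat m (n / 2)).testBit c = (revNat m (n / 2)).testBit c := by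
        rw [Nat.testBit_eq_decide_div_mod_eq, Nat.testBit_eq_decide_div_mod_eq]
        have h2m : (2:ℕ) ^ m = 2 ^ (m - c) * 2 ^ c := by
          rw [← pow_add]; congr 1; omega
        have hd : (n % 2 * 2 ^ m + revNat m (n / 2)) / 2 ^ c
            = revNat m (n / 2) / 2 ^ c + n % 2 * 2 ^ (m - c) := by
          rw [h2m, ← mul_assoc, Nat.add_comm, Nat.add_mul_div_right _ _ (tpp c)]
        rw [hd]
        have heven : n % 2 * 2 ^ (m - c) % 2 = 0 := by
          have hmc : (2:ℕ) ^ (m - c) = 2 ^ (m - c - 1) * 2 := by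
            rw [← pow_succ]; congr 1; omega
          rw [hmc, ← mul_assoc, Nat.mul_mod_left]
        have : (revNat m (n / 2) / 2 ^ c + n % 2 * 2 ^ (m - c)) % 2
            = revNat m (n / 2) / 2 ^ c % 2 := by omega
        rw [this]
      rw [key, ih (n / 2) c hclt, ← Nat.testBit_add_one]
      congr 1
      omega

lemma revNat_revNat (m : ℕ) {n : ℕ} (hn : n < 2 ^ m) : revNat m (revNat m n) = n := by
  apply Nat.eq_of_testBit_eq
  intro b
  by_cases hb : b < m
  · rw [testBit_revNat m _ b hb, testBit_revNat m _ (m - 1 - b) (by omega),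
      show m - 1 - (m - 1 - b) = b from by omega]
  · have h1 : (revNat m (revNat m n)).testBit b = false :=
      Nat.testBit_eq_false_of_lt
        (lt_of_lt_of_le (revNat_lt _ _) (Nat.pow_le_pow_right (by norm_num) (by omega)))
    have h2 : n.testBit b = false :=
      Nat.testBit_eq_false_of_lt
        (lt_of_lt_of_le hn (Nat.pow_le_pow_right (by norm_num) (by omega)))
    rw [h1, h2]

/-! ### The butterfly factors -/

noncomputable def g (m k j s : ℕ) : ℂ :=
  Complex.exp (-2 * Real.pi * Complex.I * ((bitv j (m - 1 - s) * (k % 2 ^ (m - s)) : ℕ)) /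
    ((2 ^ (m - s) : ℕ)))

noncomputable def Bf (m t : ℕ) : Matrix (Fin (2 ^ m)) (Fin (2 ^ m)) ℂ :=
  Matrix.of fun i j =>
    if (i : ℕ) ^^^ (j : ℕ) = 0 ∨ (i : ℕ) ^^^ (j : ℕ) = 2 ^ (m - 1 - t) then
      g m (i : ℕ) (j : ℕ) t else 0

noncomputable def Pt (m t : ℕ) : Matrix (Fin (2 ^ m)) (Fin (2 ^ m)) ℂ :=
  ((List.range t).map (Bf m)).prod

lemma Pt_zero (m : ℕ) : Pt m 0 = 1 := by simp [Pt]

lemma Pt_succ (m t : ℕ) : Pt m (t + 1) = Pt m t * Bf m t := by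
  simp [Pt, List.range_succ]

lemma g_congr {m k k' j j' s : ℕ} (hj : j.testBit (m - 1 - s) = j'.testBit (m - 1 - s))
    (hk : k % 2 ^ (m - s) = k' % 2 ^ (m - s)) : g m k j s = g m k' j' s := by
  unfold g bitv
  rw [hj, hk]

/-- Main invariant: entries of partial butterfly products. -/
lemma Pt_apply (m : ℕ) : ∀ t, t ≤ m → ∀ k j : Fin (2 ^ m),
    Pt m t k j = if (j : ℕ) % 2 ^ (m - t) = (k : ℕ) % 2 ^ (m - t)
      then ∏ s ∈ range t, g m (k : ℕ) (j : ℕ) s else 0 := by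
  intro t
  induction t with
  | zero =>
    intro _ k j
    rw [Pt_zero]
    by_cases h : (j : ℕ) % 2 ^ (m - 0) = (k : ℕ) % 2 ^ (m - 0)
    · rw [if_pos h]
      simp only [Nat.sub_zero] at h
      rw [Nat.mod_eq_of_lt j.isLt, Nat.mod_eq_of_lt k.isLt] at h
      have hkj : k = j := Fin.ext h.symm
      subst hkj
      simp [Matrix.one_apply]
    · rw [if_neg h]
      simp only [Nat.sub_zero] at h
      rw [Nat.mod_eq_of_lt j.isLt, Nat.mod_eq_of_lt k.isLt] at h
      have hkj : k ≠ j := fun he => h (by rw [he])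
      simp [Matrix.one_apply, hkj]
  | succ t ih =>
    intro ht k j
    have htm : t < m := ht
    have ihm := ih (le_of_lt htm)
    have hmt1 : m - (t + 1) = m - 1 - t := by omega
    rw [Pt_succ, Matrix.mul_apply]
    by_cases h : (j : ℕ) % 2 ^ (m - (t + 1)) = (k : ℕ) % 2 ^ (m - (t + 1))
    · rw [if_pos h]
      rw [hmt1] at h
      have hL : 2 ^ (m - t) * ((j : ℕ) / 2 ^ (m - t)) + (k : ℕ) % 2 ^ (m - t) < 2 ^ m := by
        have hj : (j : ℕ) < 2 ^ m := j.isLt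
        have h1 : (j : ℕ) / 2 ^ (m - t) < 2 ^ t := by
          apply Nat.div_lt_of_lt_mul
          rw [← pow_add]
          have he : m - t + t = m := by omega
          rw [he]; exact hj
        have h2 : (k : ℕ) % 2 ^ (m - t) < 2 ^ (m - t) := Nat.mod_lt _ (tpp _)
        have h3 : 2 ^ (m - t) * ((j : ℕ) / 2 ^ (m - t)) ≤ 2 ^ (m - t) * (2 ^ t - 1) :=
          Nat.mul_le_mul_left _ (by omega)
        have h4 : 2 ^ (m - t) * 2 ^ t = 2 ^ m := by rw [← pow_add]; congr 1; omega
        have h5 := tpp (m - t)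
        nlinarith
      set L : ℕ := 2 ^ (m - t) * ((j : ℕ) / 2 ^ (m - t)) + (k : ℕ) % 2 ^ (m - t) with hLdef
      have hLmod : L % 2 ^ (m - t) = (k : ℕ) % 2 ^ (m - t) := by
        rw [hLdef, Nat.mul_add_mod]
        exact Nat.mod_eq_of_lt (Nat.mod_lt _ (tpp _))
      have hLdiv : L / 2 ^ (m - t) = (j : ℕ) / 2 ^ (m - t) := by
        rw [hLdef, Nat.mul_add_div (tpp _), Nat.div_eq_of_lt (Nat.mod_lt _ (tpp _)),
          Nat.add_zero]
      set l0 : Fin (2 ^ m) := ⟨L, hL⟩ with hl0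
      have hbit_high : ∀ i, m - t ≤ i → L.testBit i = (j : ℕ).testBit i :=
        fun i hi => testBit_eq_of_div_eq hLdiv hi
      have hbit_low : ∀ i, i < m - t → L.testBit i = (k : ℕ).testBit i :=
        fun i hi => testBit_eq_of_mod_eq hLmod hi
      have hkj_low : ∀ i, i < m - 1 - t → (k : ℕ).testBit i = (j : ℕ).testBit i :=
        fun i hi => (testBit_eq_of_mod_eq h hi).symm
      have hxor : L ^^^ (j : ℕ) = 0 ∨ L ^^^ (j : ℕ) = 2 ^ (m - 1 - t) := by
        apply xor_eq_of_testBit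
        intro i hip
        by_cases hi : i < m - t
        · rw [hbit_low i hi, hkj_low i (by omega)]
        · exact hbit_high i (by omega)
      have hmain : (∑ l, Pt m t k l * Bf m t l j) = Pt m t k l0 * Bf m t l0 j := by
        apply Finset.sum_eq_single
        · intro l _ hl
          rw [ihm k l]
          by_cases hlk : (l : ℕ) % 2 ^ (m - t) = (k : ℕ) % 2 ^ (m - t)
          · by_cases hlx : (l : ℕ) ^^^ (j : ℕ) = 0 ∨ (l : ℕ) ^^^ (j : ℕ) = 2 ^ (m - 1 - t)
            · exfalso
              apply hl
              apply Fin.ext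
              show (l : ℕ) = L
              apply Nat.eq_of_testBit_eq
              intro i
              by_cases hi : i < m - t
              · rw [hbit_low i hi]
                exact testBit_eq_of_mod_eq hlk hi
              · rw [hbit_high i (by omega)]
                exact xor_testBit_eq hlx (by omega)
            · have hBf0 : Bf m t l j = 0 := by
                simp only [Bf, Matrix.of_apply]
                rw [if_neg hlx]
              rw [hBf0, mul_zero]
          · rw [if_neg hlk, zero_mul]
        · intro h'
          exact absurd (Finset.mem_univ l0) h'
      rw [hmain, ihm k l0]
      have hcond : (l0 : ℕ) % 2 ^ (m - t) = (k : ℕ) % 2 ^ (m - t) := hLmod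
      rw [if_pos hcond]
      have hBf : Bf m t l0 j = g m L (j : ℕ) t := by
        simp only [Bf, Matrix.of_apply]
        rw [if_pos hxor]
      have hBfval : g m L (j : ℕ) t = g m (k : ℕ) (j : ℕ) t := g_congr rfl hLmod
      have hgs : ∀ s ∈ range t, g m (k : ℕ) (l0 : ℕ) s = g m (k : ℕ) (j : ℕ) s := by
        intro s hs
        rw [Finset.mem_range] at hs
        exact g_congr (hbit_high (m - 1 - s) (by omega)) rfl
      rw [hBf, hBfval, Finset.prod_congr rfl hgs, ← Finset.prod_range_succ]
    · rw [if_neg h]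
      rw [hmt1] at h
      apply Finset.sum_eq_zero
      intro l _
      rw [ihm k l]
      by_cases hlk : (l : ℕ) % 2 ^ (m - t) = (k : ℕ) % 2 ^ (m - t)
      · by_cases hlx : (l : ℕ) ^^^ (j : ℕ) = 0 ∨ (l : ℕ) ^^^ (j : ℕ) = 2 ^ (m - 1 - t)
        · exfalso
          apply h
          apply mod_eq_of_testBit
          intro i hi
          have h1 : (j : ℕ).testBit i = (l : ℕ).testBit i :=
            (xor_testBit_eq hlx (by omega)).symm
          have h2 : (l : ℕ).testBit i = (k : ℕ).testBit i :=
            testBit_eq_of_mod_eq hlk (by omega)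
          rw [h1, h2]
        · have hBf0 : Bf m t l j = 0 := by
            simp only [Bf, Matrix.of_apply]
            rw [if_neg hlx]
          rw [hBf0, mul_zero]
      · rw [if_neg hlk, zero_mul]

/-! ### Exponent congruence -/

lemma exp_congr_mod {a b N : ℕ} (hN : 0 < N) (h : a ≡ b [MOD N]) :
    Complex.exp (-2 * Real.pi * Complex.I * (a : ℕ) / (N : ℕ)) =
    Complex.exp (-2 * Real.pi * Complex.I * (b : ℕ) / (N : ℕ)) := by
  obtain ⟨z, hz⟩ := (Nat.modEq_iff_dvd.mp h : (N : ℤ) ∣ (b : ℤ) - a)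
  have hNne : (N : ℂ) ≠ 0 := Nat.cast_ne_zero.mpr (by omega)
  have hza : (a : ℂ) = (b : ℂ) - (N : ℂ) * (z : ℂ) := by
    have hc := congrArg (fun x : ℤ => (x : ℂ)) hz
    push_cast at hc
    linear_combination -hc
  have key : -2 * Real.pi * Complex.I * (a : ℕ) / (N : ℕ) =
      -2 * Real.pi * Complex.I * (b : ℕ) / (N : ℕ) + (z : ℤ) * (2 * Real.pi * Complex.I) := by
    rw [hza]
    field_simp
    ring
  rw [key, Complex.exp_add, Complex.exp_int_mul_two_pi_mul_I, mul_one]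

lemma g_scaled (m k n s : ℕ) (hs : s < m) :
    g m k (revNat m n) s =
      Complex.exp (-2 * Real.pi * Complex.I *
        ((bitv n s * (k % 2 ^ (m - s)) * 2 ^ s : ℕ)) / ((2 ^ m : ℕ))) := by
  unfold g
  have hb : bitv (revNat m n) (m - 1 - s) = bitv n s := by
    unfold bitv
    rw [testBit_revNat m n (m - 1 - s) (by omega),
      show m - 1 - (m - 1 - s) = s from by omega]
  rw [hb]
  congr 1
  have h2 : ((2 : ℂ) ^ m) = (2 : ℂ) ^ (m - s) * 2 ^ s := by
    rw [← pow_add]; congr 1; omega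
  have hne : ((2 : ℂ) ^ (m - s)) ≠ 0 := pow_ne_zero _ (by norm_num)
  have hne2 : ((2 : ℂ) ^ s) ≠ 0 := pow_ne_zero _ (by norm_num)
  push_cast
  rw [h2]
  field_simp

end DftBPAux

/-- `M ∈ 𝔽^{2^m × 2^m}` is a *butterfly factor at level `k`* (`0 ≤ k < m`) if `M_{i,j} = 0`
whenever `i ≠ j` and the bitwise XOR of `i` and `j` is not `2^(m−1−k)`. -/
def IsButterflyFactor {𝔽 : Type*} [Zero 𝔽] (m k : ℕ)
    (M : Matrix (Fin (2 ^ m)) (Fin (2 ^ m)) 𝔽) : Prop :=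
  ∀ i j : Fin (2 ^ m), i ≠ j → Nat.xor (i : ℕ) (j : ℕ) ≠ 2 ^ (m - 1 - k) → M i j = 0

/-- A *butterfly matrix* is a product `M_0 · M_1 ⋯ M_{m−1}` where each `M_k` is a butterfly
factor at level `k`. -/
def IsButterflyMatrix {𝔽 : Type*} [Semiring 𝔽] (m : ℕ)
    (B : Matrix (Fin (2 ^ m)) (Fin (2 ^ m)) 𝔽) : Prop :=
  ∃ M : Fin m → Matrix (Fin (2 ^ m)) (Fin (2 ^ m)) 𝔽,
    (∀ k : Fin m, IsButterflyFactor m (k : ℕ) (M k)) ∧ B = (List.ofFn M).prod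

open DftBPAux Finset in
/-- **The DFT matrix lies in the class BP.**  For `N = 2^m`, the DFT matrix
`(F_N)_{k,n} = exp(−2πi·k·n/N)` factors as `M_0 · M_1 ⋯ M_{m−1} · P_σ` where each `M_k` is a
butterfly factor at level `k` and `P_σ` is a permutation matrix. -/
theorem dft_mem_BP (m : ℕ) (hm : 1 ≤ m) :
    ∃ (M : Fin m → Matrix (Fin (2 ^ m)) (Fin (2 ^ m)) ℂ) (σ : Equiv.Perm (Fin (2 ^ m))),
      (∀ k : Fin m, IsButterflyFactor m (k : ℕ) (M k)) ∧
      (Matrix.of fun k n : Fin (2 ^ m) =>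
          Complex.exp (-2 * Real.pi * Complex.I * (k : ℕ) * (n : ℕ) / (2 ^ m : ℕ))) =
        (List.ofFn M).prod * σ.permMatrix ℂ := by
  classical
  let σ : Equiv.Perm (Fin (2 ^ m)) :=
    ⟨fun j => ⟨revNat m j, revNat_lt m j⟩, fun j => ⟨revNat m j, revNat_lt m j⟩,
      fun j => Fin.ext (revNat_revNat m j.isLt), fun j => Fin.ext (revNat_revNat m j.isLt)⟩
  refine ⟨fun t => Bf m (t : ℕ), σ, ?_, ?_⟩
  · intro t i j hij hxor
    simp only [Bf, Matrix.of_apply]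
    rw [if_neg]
    rintro (h0 | hp)
    · exact hij (Fin.ext (xor_eq_zero_iff.mp h0))
    · exact hxor hp
  · have hofFn : (List.ofFn fun t : Fin m => Bf m (t : ℕ)) = (List.range m).map (Bf m) := by
      apply List.ext_getElem
      · simp
      · intro i h1 h2
        simp
    rw [hofFn]
    rw [show ((List.range m).map (Bf m)).prod = Pt m m from rfl]
    have hperm : Pt m m * σ.permMatrix ℂ = (Pt m m).submatrix id σ.symm :=
      PEquiv.mul_toMatrix_toPEquiv (Pt m m) σ
    rw [hperm]
    ext k n
    simp only [Matrix.of_apply, Matrix.submatrix_apply, id]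
    have hσ : σ.symm n = (⟨revNat m (n : ℕ), revNat_lt m (n : ℕ)⟩ : Fin (2 ^ m)) := rfl
    rw [hσ, Pt_apply m m le_rfl k ⟨revNat m (n : ℕ), revNat_lt m (n : ℕ)⟩,
      if_pos (by simp only [Nat.sub_self, pow_zero, Nat.mod_one])]
    have hg : ∀ s ∈ range m,
        g m (k : ℕ) ((⟨revNat m (n : ℕ), revNat_lt m (n : ℕ)⟩ : Fin (2 ^ m)) : ℕ) s =
        Complex.exp (-2 * Real.pi * Complex.I *
          ((bitv (n : ℕ) s * ((k : ℕ) % 2 ^ (m - s)) * 2 ^ s : ℕ)) / ((2 ^ m : ℕ))) :=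
      fun s hs => g_scaled m (k : ℕ) (n : ℕ) s (Finset.mem_range.mp hs)
    rw [Finset.prod_congr rfl hg, ← Complex.exp_sum]
    have hsum : (∑ s ∈ range m, -2 * (Real.pi : ℂ) * Complex.I *
          ((bitv (n : ℕ) s * ((k : ℕ) % 2 ^ (m - s)) * 2 ^ s : ℕ) : ℂ) / ((2 ^ m : ℕ) : ℂ))
        = -2 * (Real.pi : ℂ) * Complex.I *
          ((∑ s ∈ range m, bitv (n : ℕ) s * ((k : ℕ) % 2 ^ (m - s)) * 2 ^ s : ℕ) : ℂ) /
          ((2 ^ m : ℕ) : ℂ) := by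
      rw [Nat.cast_sum, Finset.mul_sum, Finset.sum_div]
    rw [hsum]
    -- the exponent congruence
    have hsplit : ∀ s ∈ range m, bitv (n : ℕ) s * (k : ℕ) * 2 ^ s
        = bitv (n : ℕ) s * ((k : ℕ) % 2 ^ (m - s)) * 2 ^ s
          + 2 ^ m * (bitv (n : ℕ) s * ((k : ℕ) / 2 ^ (m - s))) := by
      intro s hs
      rw [Finset.mem_range] at hs
      have h2m : (2 : ℕ) ^ (m - s) * 2 ^ s = 2 ^ m := by
        rw [← pow_add]; congr 1; omega
      have hstep : bitv (n : ℕ) s * (k : ℕ) * 2 ^ s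
          = bitv (n : ℕ) s * (2 ^ (m - s) * ((k : ℕ) / 2 ^ (m - s)) + (k : ℕ) % 2 ^ (m - s))
            * 2 ^ s := by
        rw [Nat.div_add_mod]
      have hfin : bitv (n : ℕ) s * (2 ^ (m - s) * ((k : ℕ) / 2 ^ (m - s)) + (k : ℕ) % 2 ^ (m - s))
            * 2 ^ s
          = bitv (n : ℕ) s * ((k : ℕ) % 2 ^ (m - s)) * 2 ^ s
            + 2 ^ (m - s) * 2 ^ s * (bitv (n : ℕ) s * ((k : ℕ) / 2 ^ (m - s))) := by ring
      rw [h2m] at hfin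
      rw [hstep, hfin]
    have hkn : (k : ℕ) * (n : ℕ)
        = (∑ s ∈ range m, bitv (n : ℕ) s * ((k : ℕ) % 2 ^ (m - s)) * 2 ^ s)
          + 2 ^ m * ∑ s ∈ range m, bitv (n : ℕ) s * ((k : ℕ) / 2 ^ (m - s)) := by
      have h1 : (k : ℕ) * (n : ℕ) = ∑ s ∈ range m, bitv (n : ℕ) s * (k : ℕ) * 2 ^ s := by
        conv_lhs => rw [← sum_bitv m (n : ℕ) n.isLt]
        rw [Finset.mul_sum]
        exact Finset.sum_congr rfl fun s _ => by ring
      rw [h1, Finset.sum_congr rfl hsplit, Finset.sum_add_distrib, ← Finset.mul_sum]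
    have hmod : (∑ s ∈ range m, bitv (n : ℕ) s * ((k : ℕ) % 2 ^ (m - s)) * 2 ^ s)
        ≡ (k : ℕ) * (n : ℕ) [MOD 2 ^ m] := by
      rw [hkn]
      exact (Nat.add_mul_mod_self_left _ _ _).symm
    rw [exp_congr_mod (tpp m) hmod]
    congr 1
    push_cast
    ring
end

section
/- Let m ≥ 1 and N = 2^m, and let G ∈ ℂ^{N×N} be the inverse DFT matrix with entries G_{k,n} = (1/N)·exp(2πi·k·n/N). Then there exist matrices M_0, M_1, …, M_{m−1} ∈ ℂ^{N×N}, where each M_k is a butterfly factor at level k (i.e., (M_k)_{i,j} = 0 whenever i ≠ j and the bitwise XOR of i and j is not equal to 2^{m−1−k}), and a permutation σ of Fin N with permutation matrix P_σ, such that G = M_0 · M_1 ⋯ M_{m−1} · P_σ. That is, the inverse DFT matrix lies in the class BP. -/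
namespace InvDFTAux

/- ### Digit toolkit -/

lemma sum_bits_lt (f : ℕ → ℕ) (hf : ∀ j, f j ≤ 1) (m : ℕ) :
    (∑ j ∈ Finset.range m, f j * 2^j) < 2^m := by
  induction m with
  | zero => simp
  | succ n ih =>
    rw [Finset.sum_range_succ, pow_succ]
    have h1 := hf n
    have h2 : f n * 2^n ≤ 1 * 2^n := Nat.mul_le_mul_right _ h1
    omega

lemma digit_extract (f : ℕ → ℕ) (hf : ∀ j, f j ≤ 1) :
    ∀ m t, t < m → (∑ j ∈ Finset.range m, f j * 2^j) / 2^t % 2 = f t := by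
  intro m
  induction m with
  | zero => omega
  | succ n ih =>
    intro t ht
    rw [Finset.sum_range_succ]
    rcases Nat.lt_or_ge t n with h | h
    · have h2 : f n * 2^n = (f n * 2^(n-t-1) * 2) * 2^t := by
        rw [mul_assoc, mul_assoc, ← pow_succ', ← pow_add]
        congr 2
        omega
      rw [h2, Nat.add_mul_div_right _ _ (Nat.two_pow_pos t), Nat.add_mul_mod_self_right]
      exact ih t h
    · have ht' : t = n := by omega
      subst ht'
      have h3 : (∑ j ∈ Finset.range t, f j * 2^j) < 2^t := sum_bits_lt f hf t
      rw [Nat.add_mul_div_right _ _ (Nat.two_pow_pos t), Nat.div_eq_of_lt h3]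
      have := hf t
      omega

lemma binary_expansion : ∀ (m n : ℕ), (∑ k ∈ Finset.range m, (n / 2^k % 2) * 2^k) = n % 2^m := by
  intro m
  induction m with
  | zero => simp [Nat.mod_one]
  | succ n ih =>
    intro x
    rw [Finset.sum_range_succ, ih, pow_succ, Nat.mod_mul]
    ring

lemma bit_low_eq {d t a b : ℕ} (ht : t < d) (h : a % 2^d = b % 2^d) :
    a / 2^t % 2 = b / 2^t % 2 := by
  have key : ∀ c : ℕ, c / 2^t % 2 = (c % 2^d) / 2^t % 2 := by
    intro c
    conv_lhs => rw [← Nat.mod_add_div c (2^d)]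
    have h2 : 2^d * (c / 2^d) = (2^(d-t-1) * (c / 2^d) * 2) * 2^t := by
      have e : (2:ℕ)^d = 2^(d-t-1) * 2 * 2^t := by
        rw [mul_assoc, ← pow_succ', ← pow_add]; congr 1; omega
      rw [e]; ring
    rw [h2, Nat.add_mul_div_right _ _ (Nat.two_pow_pos t), Nat.add_mul_mod_self_right]
  rw [key a, key b, h]

lemma bit_high_eq {s t a b : ℕ} (ht : s ≤ t) (h : a / 2^s = b / 2^s) :
    a / 2^t % 2 = b / 2^t % 2 := by
  have key : ∀ c : ℕ, c / 2^t = c / 2^s / 2^(t-s) := by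
    intro c
    rw [Nat.div_div_eq_div_mul, ← pow_add]
    congr 2
    omega
  rw [key a, key b, h]

lemma eq_of_parts {t a b : ℕ} (h1 : a / 2^(t+1) = b / 2^(t+1)) (h2 : a % 2^t = b % 2^t)
    (h3 : a / 2^t % 2 = b / 2^t % 2) : a = b := by
  have e1 : a % 2^(t+1) = a % 2^t + 2^t * (a / 2^t % 2) := by
    rw [pow_succ, Nat.mod_mul]
  have e2 : b % 2^(t+1) = b % 2^t + 2^t * (b / 2^t % 2) := by
    rw [pow_succ, Nat.mod_mul]
  have d1 := Nat.div_add_mod a (2^(t+1))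
  have d2 := Nat.div_add_mod b (2^(t+1))
  have m1 : 2^(t+1) * (a / 2^(t+1)) = 2^(t+1) * (b / 2^(t+1)) := by rw [h1]
  have m2 : 2^t * (a / 2^t % 2) = 2^t * (b / 2^t % 2) := by rw [h3]
  omega

lemma xor_eq {d a b : ℕ} (h1 : a / 2^(d+1) = b / 2^(d+1)) (h2 : a % 2^d = b % 2^d)
    (hne : a ≠ b) : a ^^^ b = 2^d := by
  have hbit : a / 2^d % 2 ≠ b / 2^d % 2 := fun h => hne (eq_of_parts h1 h2 h)
  apply Nat.eq_of_testBit_eq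
  intro i
  rw [Nat.testBit_xor, Nat.testBit_two_pow, Nat.testBit_eq_decide_div_mod_eq, Nat.testBit_eq_decide_div_mod_eq]
  rcases lt_trichotomy i d with h | h | h
  · rw [bit_low_eq h h2]
    simp [Bool.xor_self]
    omega
  · subst h
    have ha := Nat.mod_two_eq_zero_or_one (a / 2^i)
    have hb := Nat.mod_two_eq_zero_or_one (b / 2^i)
    rcases ha with ha | ha <;> rcases hb with hb | hb <;> simp [ha, hb] at hbit ⊢
  · rw [bit_high_eq (by omega : d + 1 ≤ i) h1]
    simp [Bool.xor_self]
    omega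

noncomputable def ω (m : ℕ) : ℂ := Complex.exp (2 * Real.pi * Complex.I / (2^m : ℕ))

lemma ω_pow_N (m : ℕ) : ω m ^ (2^m : ℕ) = 1 := by
  rw [ω, ← Complex.exp_nat_mul]
  have hN : ((2^m : ℕ) : ℂ) ≠ 0 := Nat.cast_ne_zero.mpr (Nat.two_pow_pos m).ne'
  rw [mul_div_assoc']
  rw [mul_comm, mul_div_assoc, div_self hN, mul_one, Complex.exp_two_pi_mul_I]

lemma ω_pow_add_N (m x y : ℕ) : ω m ^ (x + 2^m * y) = ω m ^ x := by
  rw [pow_add, mul_comm (2^m) y, pow_mul', ω_pow_N, one_pow, mul_one]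

noncomputable def Bf (m k : ℕ) : Matrix (Fin (2^m)) (Fin (2^m)) ℂ :=
  Matrix.of fun a b =>
    if (a:ℕ) / 2^(m-k) = (b:ℕ) / 2^(m-k) ∧ (a:ℕ) % 2^(m-1-k) = (b:ℕ) % 2^(m-1-k)
    then (1/2 : ℂ) * ω m ^ (2^k * ((a:ℕ) % 2^(m-k)) * ((b:ℕ) / 2^(m-1-k) % 2))
    else 0

lemma bf_butterfly (m k : ℕ) (hk : k < m) :
    ∀ i j : Fin (2^m), i ≠ j → Nat.xor (i:ℕ) (j:ℕ) ≠ 2^(m-1-k) → Bf m k i j = 0 := by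
  intro i j hne hxor
  rw [Bf, Matrix.of_apply, if_neg]
  rintro ⟨h1, h2⟩
  apply hxor
  have hd : m - k = (m - 1 - k) + 1 := by omega
  rw [hd] at h1
  exact xor_eq h1 h2 (fun h => hne (Fin.ext h))



noncomputable def Sfuel (m : ℕ) : ℕ → ℕ → Matrix (Fin (2^m)) (Fin (2^m)) ℂ
  | 0, _ => 1
  | (f+1), t => Bf m t * Sfuel m f (t+1)

lemma ofFn_prod_eq (m : ℕ) : ∀ f t, (List.ofFn fun j : Fin f => Bf m (t + (j:ℕ))).prod = Sfuel m f t := by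
  intro f
  induction f with
  | zero => intro t; simp [Sfuel]
  | succ n ih =>
    intro t
    rw [List.ofFn_succ, List.prod_cons, Sfuel]
    have ht : (fun i : Fin n => Bf m (t + ((i:ℕ) + 1))) =
        (fun i : Fin n => Bf m (t + 1 + (i:ℕ))) := by
      funext i
      have e : t + ((i:ℕ) + 1) = t + 1 + (i:ℕ) := by omega
      rw [e]
    simp only [Fin.val_succ, Fin.val_zero, Nat.add_zero, ht, ih (t+1)]

lemma Sfuel_apply (m : ℕ) : ∀ f t, t + f = m → ∀ a b : Fin (2^m),
    Sfuel m f t a b =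
      if (a:ℕ) / 2^f = (b:ℕ) / 2^f
      then (1/2 : ℂ)^f *
        ω m ^ (∑ k ∈ Finset.range f, 2^(t+k) * ((a:ℕ) % 2^(f-k)) * ((b:ℕ) / 2^(f-1-k) % 2))
      else 0 := by
  intro f
  induction f with
  | zero =>
    intro t _ a b
    simp only [pow_zero, Nat.div_one, Finset.range_zero, Finset.sum_empty, one_mul]
    rw [Sfuel, Matrix.one_apply]
    by_cases h : a = b
    · rw [if_pos h, if_pos (by rw [h])]
    · rw [if_neg h, if_neg (fun hv => h (Fin.ext hv))]
  | succ f ih =>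
    intro t hm a b
    rw [Sfuel, Matrix.mul_apply]
    have hm' : t + 1 + f = m := by omega
    by_cases hc : (a:ℕ) / 2^(f+1) = (b:ℕ) / 2^(f+1)
    · -- unique path through c₀
      have hblt : (b:ℕ) / 2^f < 2^(m-f) := by
        apply Nat.div_lt_iff_lt_mul (Nat.two_pow_pos f) |>.mpr
        rw [← pow_add]
        have : m - f + f = m := by omega
        rw [this]
        exact b.isLt
      have hamod : (a:ℕ) % 2^f < 2^f := Nat.mod_lt _ (Nat.two_pow_pos f)
      have hc0lt : 2^f * ((b:ℕ) / 2^f) + (a:ℕ) % 2^f < 2^m := by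
        have h2 : ((b:ℕ) / 2^f + 1) * 2^f ≤ 2^(m-f) * 2^f := Nat.mul_le_mul_right _ hblt
        rw [← pow_add] at h2
        have h3 : m - f + f = m := by omega
        rw [h3, add_one_mul] at h2
        have h4 : (b:ℕ) / 2^f * 2^f = 2^f * ((b:ℕ) / 2^f) := Nat.mul_comm _ _
        omega
      have e_mod : (2^f * ((b:ℕ)/2^f) + (a:ℕ)%2^f) % 2^f = (a:ℕ)%2^f := by
        rw [Nat.mul_add_mod, Nat.mod_eq_of_lt hamod]
      have e_div : (2^f * ((b:ℕ)/2^f) + (a:ℕ)%2^f) / 2^f = (b:ℕ)/2^f := by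
        rw [Nat.mul_add_div (Nat.two_pow_pos f), Nat.div_eq_of_lt hamod, Nat.add_zero]
      have hmt : m - t = f + 1 := by omega
      have hmt1 : m - 1 - t = f := by omega
      have e_div1 : (2^f * ((b:ℕ)/2^f) + (a:ℕ)%2^f) / 2^(f+1) = (b:ℕ)/2^(f+1) := by
        rw [pow_succ, ← Nat.div_div_eq_div_mul, ← Nat.div_div_eq_div_mul, e_div]
      rw [if_pos hc]
      rw [Fintype.sum_eq_single (⟨2^f * ((b:ℕ)/2^f) + (a:ℕ)%2^f, hc0lt⟩ : Fin (2^m)) ?_]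
      · -- value at the unique path point
        rw [Bf, Matrix.of_apply, ih (t+1) hm' _ b]
        have hval : ((⟨2^f * ((b:ℕ)/2^f) + (a:ℕ)%2^f, hc0lt⟩ : Fin (2^m)) : ℕ)
            = 2^f * ((b:ℕ)/2^f) + (a:ℕ)%2^f := rfl
        rw [hmt, hmt1, hval]
        rw [if_pos ⟨by rw [e_div1, hc], e_mod.symm⟩, if_pos e_div, e_div]
        have esum : (∑ k ∈ Finset.range f,
              2^(t+1+k) * ((2^f * ((b:ℕ)/2^f) + (a:ℕ)%2^f) % 2^(f-k)) * ((b:ℕ) / 2^(f-1-k) % 2))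
            = ∑ k ∈ Finset.range f, 2^(t+1+k) * ((a:ℕ) % 2^(f-k)) * ((b:ℕ) / 2^(f-1-k) % 2) := by
          apply Finset.sum_congr rfl
          intro k hk
          have hdvd : (2:ℕ)^(f-k) ∣ 2^f := pow_dvd_pow 2 (by omega)
          have : (2^f * ((b:ℕ)/2^f) + (a:ℕ)%2^f) % 2^(f-k) = (a:ℕ) % 2^(f-k) := by
            calc (2^f * ((b:ℕ)/2^f) + (a:ℕ)%2^f) % 2^(f-k)
                = (2^f * ((b:ℕ)/2^f) + (a:ℕ)%2^f) % 2^f % 2^(f-k) :=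
                  (Nat.mod_mod_of_dvd _ hdvd).symm
              _ = (a:ℕ) % 2^f % 2^(f-k) := by rw [e_mod]
              _ = (a:ℕ) % 2^(f-k) := Nat.mod_mod_of_dvd _ hdvd
          rw [this]
        rw [esum, Finset.sum_range_succ']
        have esum2 : (∑ k ∈ Finset.range f,
              2^(t+(k+1)) * ((a:ℕ) % 2^(f+1-(k+1))) * ((b:ℕ) / 2^(f+1-1-(k+1)) % 2))
            = ∑ k ∈ Finset.range f, 2^(t+1+k) * ((a:ℕ) % 2^(f-k)) * ((b:ℕ) / 2^(f-1-k) % 2) := by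
          apply Finset.sum_congr rfl
          intro k hk
          have e1 : t+(k+1) = t+1+k := by omega
          have e2 : f+1-(k+1) = f-k := by omega
          have e3 : f+1-1-(k+1) = f-1-k := by omega
          rw [e1, e2, e3]
        rw [esum2]
        have e4 : t + 0 = t := rfl
        have e5 : f + 1 - 0 = f + 1 := rfl
        have e6 : f + 1 - 1 - 0 = f := rfl
        rw [e4, e5, e6, pow_succ (1/2 : ℂ), pow_add (ω m)]
        ring
      · -- all other terms vanish
        intro c hne
        rw [Bf, Matrix.of_apply]
        by_cases h1 : (a:ℕ)/2^(m-t) = (c:ℕ)/2^(m-t) ∧ (a:ℕ)%2^(m-1-t) = (c:ℕ)%2^(m-1-t)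
        · rw [ih (t+1) hm' c b]
          by_cases h2 : (c:ℕ)/2^f = (b:ℕ)/2^f
          · exfalso
            apply hne
            apply Fin.ext
            rw [hmt1] at h1
            show (c:ℕ) = 2^f * ((b:ℕ)/2^f) + (a:ℕ)%2^f
            conv_lhs => rw [← Nat.div_add_mod (c:ℕ) (2^f)]
            rw [h2, ← h1.2]
          · rw [if_neg h2, mul_zero]
        · rw [if_neg h1, zero_mul]
    · rw [if_neg hc]
      apply Finset.sum_eq_zero
      intro c _
      rw [Bf, Matrix.of_apply]
      by_cases h1 : (a:ℕ) / 2^(m-t) = (c:ℕ) / 2^(m-t) ∧ (a:ℕ) % 2^(m-1-t) = (c:ℕ) % 2^(m-1-t)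
      · rw [if_pos h1, ih (t+1) hm' c b]
        have hneg : ¬ ((c:ℕ) / 2^f = (b:ℕ) / 2^f) := by
          intro h2
          apply hc
          have hmt : m - t = f + 1 := by omega
          rw [hmt] at h1
          have e1 : (c:ℕ) / 2^(f+1) = (b:ℕ) / 2^(f+1) := by
            rw [pow_succ, ← Nat.div_div_eq_div_mul, ← Nat.div_div_eq_div_mul, h2]
          omega
        rw [if_neg hneg, mul_zero]
      · rw [if_neg h1, zero_mul]

def revNat (m n : ℕ) : ℕ := ∑ k ∈ Finset.range m, (n / 2^(m-1-k) % 2) * 2^k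

lemma bits_le (n d : ℕ) : n / 2^d % 2 ≤ 1 := by omega

lemma revNat_lt (m n : ℕ) : revNat m n < 2^m :=
  sum_bits_lt _ (fun j => bits_le n (m-1-j)) m

lemma revNat_bit (m n t : ℕ) (ht : t < m) : revNat m n / 2^t % 2 = n / 2^(m-1-t) % 2 :=
  digit_extract _ (fun j => bits_le n (m-1-j)) m t ht

lemma revNat_revNat (m n : ℕ) (hn : n < 2^m) : revNat m (revNat m n) = n := by
  rw [revNat]
  have : ∀ k ∈ Finset.range m, (revNat m n / 2^(m-1-k) % 2) * 2^k = (n / 2^k % 2) * 2^k := by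
    intro k hk
    rw [Finset.mem_range] at hk
    rw [revNat_bit m n (m-1-k) (by omega)]
    have e : m-1-(m-1-k) = k := by omega
    rw [e]
  rw [Finset.sum_congr rfl this, binary_expansion, Nat.mod_eq_of_lt hn]

noncomputable def revPerm (m : ℕ) : Equiv.Perm (Fin (2^m)) :=
  Function.Involutive.toPerm (fun x => ⟨revNat m (x:ℕ), revNat_lt m _⟩)
    (fun x => Fin.ext (revNat_revNat m (x:ℕ) x.isLt))

lemma revPerm_symm_apply (m : ℕ) (j : Fin (2^m)) :
    ((revPerm m).symm j : ℕ) = revNat m (j:ℕ) := rfl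


lemma omega_pow_eq_exp (m : ℕ) (i j : ℕ) (hj : j < 2^m) :
    ω m ^ (∑ k ∈ Finset.range m, 2^k * (i % 2^(m-k)) * (j / 2^k % 2)) =
      Complex.exp (2 * Real.pi * Complex.I * i * j / (2^m : ℕ)) := by
  rw [← Finset.prod_pow_eq_pow_sum]
  have step1 : ∀ k ∈ Finset.range m,
      ω m ^ (2^k * (i % 2^(m-k)) * (j / 2^k % 2)) =
      ω m ^ (2^k * i * (j / 2^k % 2)) := by
    intro k hk
    rw [Finset.mem_range] at hk
    rw [← ω_pow_add_N m (2^k * (i % 2^(m-k)) * (j / 2^k % 2))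
      ((i / 2^(m-k)) * (j / 2^k % 2))]
    congr 1
    have hpow : (2:ℕ)^k * 2^(m-k) = 2^m := by
      rw [← pow_add]
      congr 1
      omega
    conv_rhs => rw [← Nat.div_add_mod i (2^(m-k))]
    rw [← hpow]
    ring
  rw [Finset.prod_congr rfl step1, Finset.prod_pow_eq_pow_sum]
  have step2 : (∑ k ∈ Finset.range m, 2^k * i * (j / 2^k % 2))
      = i * j := by
    have : ∀ k ∈ Finset.range m, 2^k * i * (j / 2^k % 2)
        = i * ((j / 2^k % 2) * 2^k) := by
      intro k _
      ring
    rw [Finset.sum_congr rfl this, ← Finset.mul_sum, binary_expansion,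
      Nat.mod_eq_of_lt hj]
  rw [step2, ω, ← Complex.exp_nat_mul]
  congr 1
  push_cast
  ring

end InvDFTAux

/-- **The inverse DFT matrix lies in the class BP.**  For `N = 2^m`, the inverse DFT matrix
`G_{k,n} = (1/N)·exp(2πi·k·n/N)` factors as `M_0 · M_1 ⋯ M_{m−1} · P_σ` where each `M_k` is
a butterfly factor at level `k` and `P_σ` is a permutation matrix. -/
theorem inverse_dft_mem_BP (m : ℕ) (hm : 1 ≤ m) :
    ∃ (M : Fin m → Matrix (Fin (2 ^ m)) (Fin (2 ^ m)) ℂ) (σ : Equiv.Perm (Fin (2 ^ m))),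
      (∀ k : Fin m, IsButterflyFactor m (k : ℕ) (M k)) ∧
      (Matrix.of fun k n : Fin (2 ^ m) =>
          (1 / (2 ^ m : ℕ) : ℂ) *
            Complex.exp (2 * Real.pi * Complex.I * (k : ℕ) * (n : ℕ) / (2 ^ m : ℕ))) =
        (List.ofFn M).prod * σ.permMatrix ℂ := by
  classical
  refine ⟨fun k : Fin m => InvDFTAux.Bf m (k:ℕ), InvDFTAux.revPerm m, ?_, ?_⟩
  · intro k
    exact InvDFTAux.bf_butterfly m (k:ℕ) k.isLt
  · have hprod : (List.ofFn fun k : Fin m => InvDFTAux.Bf m (k:ℕ)).prod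
        = InvDFTAux.Sfuel m m 0 := by
      rw [← InvDFTAux.ofFn_prod_eq m m 0]
      have h : (fun j : Fin m => InvDFTAux.Bf m (0 + (j:ℕ)))
          = fun j : Fin m => InvDFTAux.Bf m (j:ℕ) := by
        funext j
        rw [Nat.zero_add]
      rw [h]
    rw [hprod, show (InvDFTAux.revPerm m).permMatrix ℂ
        = (InvDFTAux.revPerm m).toPEquiv.toMatrix from rfl,
      PEquiv.mul_toMatrix_toPEquiv]
    ext i j
    rw [Matrix.submatrix_apply, id_eq, Matrix.of_apply,
      InvDFTAux.Sfuel_apply m m 0 (Nat.zero_add m) i _]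
    have h0i : (i:ℕ) / 2^m = 0 := Nat.div_eq_of_lt i.isLt
    have h0j : (((InvDFTAux.revPerm m).symm j : Fin (2^m)) : ℕ) / 2^m = 0 :=
      Nat.div_eq_of_lt (Fin.isLt _)
    rw [if_pos (by rw [h0i, h0j])]
    have hsum : (∑ k ∈ Finset.range m, 2^(0+k) * ((i:ℕ) % 2^(m-k)) *
          (((((InvDFTAux.revPerm m).symm j) : Fin (2^m)) : ℕ) / 2^(m-1-k) % 2))
        = ∑ k ∈ Finset.range m, 2^k * ((i:ℕ) % 2^(m-k)) * ((j:ℕ) / 2^k % 2) := by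
      apply Finset.sum_congr rfl
      intro k hk
      rw [Finset.mem_range] at hk
      rw [Nat.zero_add, InvDFTAux.revPerm_symm_apply,
        InvDFTAux.revNat_bit m (j:ℕ) (m-1-k) (by omega)]
      have e : m-1-(m-1-k) = k := by omega
      rw [e]
    rw [hsum, InvDFTAux.omega_pow_eq_exp m (i:ℕ) (j:ℕ) j.isLt]
    congr 1
    rw [div_pow, one_pow]
    push_cast
    ring
end

section
/- Let m ≥ 1 and N = 2^m. For every h : ZMod N → ℂ, let C ∈ ℂ^{N×N} be the circulant matrix with entries C_{i,j} = h(i−j) (indices reidentified with Fin N in the natural way). Then there exist butterfly matrices B₁, B₂ ∈ ℂ^{N×N} (each a product M_0 · M_1 ⋯ M_{m−1} of butterfly factors, where (M_k)_{i,j} = 0 whenever i ≠ j and the bitwise XOR of i and j is not equal to 2^{m−1−k}) and permutation matrices P₁, P₂ such that C = B₁ · P₁ · B₂ · P₂. That is, every circulant matrix (one-dimensional cyclic convolution) of size 2^m lies in the class (BP)². -/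
/-- reverse the low `s` bits of `x` -/
def brev : ℕ → ℕ → ℕ
  | 0, _ => 0
  | s+1, x => (x % 2) * 2^s + brev s (x / 2)

lemma brev_lt : ∀ (s x : ℕ), brev s x < 2^s
  | 0, _ => by simp [brev]
  | s+1, x => by
    have h1 := brev_lt s (x / 2)
    have h2 : x % 2 < 2 := Nat.mod_lt _ (by norm_num)
    have : (x % 2) * 2^s ≤ 2^s := by nlinarith
    simp only [brev, pow_succ]
    nlinarith

lemma brev_top : ∀ (s lo b : ℕ), lo < 2^s → b < 2 →
    brev (s+1) (lo + 2^s * b) = b + 2 * brev s lo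
  | 0, lo, b, hlo, hb => by
    interval_cases lo; interval_cases b <;> simp [brev]
  | s+1, lo, b, hlo, hb => by
    have e2 : (0:ℕ) < 2^s := Nat.two_pow_pos s
    have hp : (2:ℕ)^(s+1) = 2 * 2^s := by ring
    have hmod : (lo + 2^(s+1) * b) % 2 = lo % 2 := by
      interval_cases b <;> omega
    have hdiv : (lo + 2^(s+1) * b) / 2 = lo / 2 + 2^s * b := by
      interval_cases b <;> omega
    have hlo2 : lo / 2 < 2^s := by omega
    conv_lhs => rw [brev]
    rw [hmod, hdiv, brev_top s (lo/2) b hlo2 hb]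
    conv_rhs => rw [brev]
    ring

lemma brev_brev : ∀ (s x : ℕ), x < 2^s → brev s (brev s x) = x
  | 0, x, hx => by simp at hx; simp [hx, brev]
  | s+1, x, hx => by
    have hp : (2:ℕ)^(s+1) = 2 * 2^s := by ring
    have hx2 : x / 2 < 2^s := by omega
    have h1 : brev (s+1) x = brev s (x/2) + 2^s * (x % 2) := by
      conv_lhs => rw [brev]
      ring
    rw [h1, brev_top s _ _ (brev_lt s (x/2)) (Nat.mod_lt _ (by norm_num)),
      brev_brev s (x/2) hx2]
    omega

lemma testBit_div_pow (x n i : ℕ) : (x / 2^n).testBit i = x.testBit (n + i) := by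
  simp [Nat.testBit_eq_decide_div_mod_eq, Nat.div_div_eq_div_mul, ← pow_add]

lemma xor_of (p i j : ℕ) (hd : i / 2^(p+1) = j / 2^(p+1)) (hm : i % 2^p = j % 2^p)
    (hne : i ≠ j) : i ^^^ j = 2^p := by
  have hbit : ∀ t, t ≠ p → i.testBit t = j.testBit t := by
    intro t ht
    rcases lt_or_gt_of_ne ht with h | h
    · have h1 : (i % 2^p).testBit t = (j % 2^p).testBit t := by rw [hm]
      simpa [Nat.testBit_mod_two_pow, h] using h1
    · have : t = (p+1) + (t - (p+1)) := by omega
      rw [this, ← testBit_div_pow, ← testBit_div_pow, hd]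
  by_cases hb : i.testBit p = j.testBit p
  · exact absurd (Nat.eq_of_testBit_eq (fun t => by
      by_cases ht : t = p
      · rw [ht, hb]
      · exact hbit t ht)) hne
  · apply Nat.eq_of_testBit_eq
    intro t
    rw [Nat.testBit_xor, Nat.testBit_two_pow]
    by_cases ht : t = p
    · subst ht
      rcases Bool.eq_false_or_eq_true (i.testBit t) with h1 | h1 <;>
        rcases Bool.eq_false_or_eq_true (j.testBit t) with h2 | h2 <;>
          simp_all
    · rw [hbit t ht, Bool.xor_self]
      simp [Ne.symm ht]

/-- FFT butterfly factor at level `k`. -/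
noncomputable def bf (m k : ℕ) (ζ : ℂ) : Matrix (Fin (2^m)) (Fin (2^m)) ℂ :=
  Matrix.of fun i j =>
    if (i:ℕ) / 2^(m-k) = (j:ℕ) / 2^(m-k) ∧ (i:ℕ) % 2^(m-1-k) = (j:ℕ) % 2^(m-1-k)
    then ζ ^ (2^k * ((i:ℕ) % 2^(m-1-k)) * (((j:ℕ) / 2^(m-1-k)) % 2)
            + 2^(m-1) * (((i:ℕ) / 2^(m-1-k)) % 2) * (((j:ℕ) / 2^(m-1-k)) % 2))
    else 0

lemma bf_isButterflyFactor (m k : ℕ) (hk : k < m) (ζ : ℂ) :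
    IsButterflyFactor m k (bf m k ζ) := by
  intro i j hne hxor
  simp only [bf, Matrix.of_apply]
  rw [if_neg]
  rintro ⟨hd, hm'⟩
  have hmk : m - k = (m - 1 - k) + 1 := by omega
  rw [hmk] at hd
  exact hxor (xor_of _ _ _ hd hm' (fun e => hne (Fin.val_injective e)))

/-- suffix products of butterfly factors -/
noncomputable def bfl (m : ℕ) (ζ : ℂ) : ℕ → ℕ → Matrix (Fin (2^m)) (Fin (2^m)) ℂ
  | 0, _ => 1
  | fuel+1, k => bf m k ζ * bfl m ζ fuel (k+1)

lemma bfl_zero (m : ℕ) (ζ : ℂ) (k : ℕ) : bfl m ζ 0 k = 1 := rfl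

lemma bfl_succ (m : ℕ) (ζ : ℂ) (fuel k : ℕ) :
    bfl m ζ (fuel+1) k = bf m k ζ * bfl m ζ fuel (k+1) := rfl

lemma bfl_apply (m : ℕ) (ζ : ℂ) (h1 : ζ^(2^m) = 1) :
    ∀ fuel k, k + fuel = m → ∀ i j : Fin (2^m),
    bfl m ζ fuel k i j =
      if (i:ℕ) / 2^fuel = (j:ℕ) / 2^fuel
      then ζ ^ (2^k * ((i:ℕ) % 2^fuel) * brev fuel ((j:ℕ) % 2^fuel)) else 0
  | 0, k, hkm, i, j => by
    rw [bfl_zero, Matrix.one_apply]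
    simp only [pow_zero, Nat.div_one, Nat.mod_one, brev, mul_zero, pow_zero]
    have hv : (i:ℕ) = (j:ℕ) ↔ i = j := Fin.val_inj
    split_ifs with h1 h2 h2 <;> simp_all
  | fuel+1, k, hkm, i, j => by
    have e2 : (0:ℕ) < 2^fuel := Nat.two_pow_pos fuel
    have hm1k : m - 1 - k = fuel := by omega
    have hmk : m - k = fuel + 1 := by omega
    have hilt : (i:ℕ) % 2^fuel < 2^fuel := Nat.mod_lt _ e2
    have hjlt : (j:ℕ) % 2^fuel < 2^fuel := Nat.mod_lt _ e2
    -- the unique index contributing to the sum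
    have ht0 : ((j:ℕ) / 2^fuel) * 2^fuel + (i:ℕ) % 2^fuel < 2^m := by
      have hj : (j:ℕ) < 2^m := j.isLt
      have h2m : (2:ℕ)^m = 2^(k+1) * 2^fuel := by rw [← pow_add]; congr 1; omega
      have hjd : (j:ℕ) / 2^fuel < 2^(k+1) := by
        rw [Nat.div_lt_iff_lt_mul e2]; omega
      have hstep : ((j:ℕ) / 2^fuel) * 2^fuel + 2^fuel ≤ 2^(k+1) * 2^fuel := by
        calc ((j:ℕ) / 2^fuel) * 2^fuel + 2^fuel = ((j:ℕ) / 2^fuel + 1) * 2^fuel := by ring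
        _ ≤ 2^(k+1) * 2^fuel := Nat.mul_le_mul_right _ (by omega)
      omega
    set t₀ : Fin (2^m) := ⟨((j:ℕ) / 2^fuel) * 2^fuel + (i:ℕ) % 2^fuel, ht0⟩ with ht0def
    have ht0mod : (t₀:ℕ) % 2^fuel = (i:ℕ) % 2^fuel := by
      show (((j:ℕ) / 2^fuel) * 2^fuel + (i:ℕ) % 2^fuel) % 2^fuel = _
      rw [mul_comm, Nat.mul_add_mod, Nat.mod_eq_of_lt hilt]
    have ht0div : (t₀:ℕ) / 2^fuel = (j:ℕ) / 2^fuel := by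
      show (((j:ℕ) / 2^fuel) * 2^fuel + (i:ℕ) % 2^fuel) / 2^fuel = _
      rw [add_comm, mul_comm, Nat.add_mul_div_left _ _ e2, Nat.div_eq_of_lt hilt, zero_add]
    have hdd : ∀ x : ℕ, x / 2^(fuel+1) = x / 2^fuel / 2 := by
      intro x
      rw [Nat.div_div_eq_div_mul, pow_succ]
    have IH := bfl_apply m ζ h1 fuel (k+1) (by omega)
    rw [bfl_succ, Matrix.mul_apply]
    rw [Finset.sum_eq_single t₀ ?uniq (by simp)]
    case uniq =>
      intro t _ htne
      rcases eq_or_ne ((i:ℕ) % 2^(m-1-k)) ((t:ℕ) % 2^(m-1-k)) with hmm | hmm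
      swap
      · simp only [bf, Matrix.of_apply]
        rw [if_neg (by tauto), zero_mul]
      rcases eq_or_ne ((t:ℕ) / 2^fuel) ((j:ℕ) / 2^fuel) with hdd2 | hdd2
      swap
      · rw [IH t j, if_neg hdd2, mul_zero]
      exfalso
      apply htne
      apply Fin.val_injective
      rw [hm1k] at hmm
      have h5 : (t:ℕ) = 2^fuel * ((t:ℕ)/2^fuel) + (t:ℕ)%2^fuel := (Nat.div_add_mod _ _).symm
      rw [hdd2, ← hmm] at h5
      show (t:ℕ) = (j:ℕ)/2^fuel * 2^fuel + (i:ℕ)%2^fuel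
      rw [h5]; ring
    -- main term
    have ht0div2 : (t₀:ℕ) / 2^(fuel+1) = (j:ℕ) / 2^(fuel+1) := by
      rw [hdd, ht0div, ← hdd]
    rw [IH t₀ j, if_pos (show (t₀:ℕ)/2^fuel = (j:ℕ)/2^fuel from ht0div)]
    simp only [bf, Matrix.of_apply, hm1k, hmk]
    simp only [ht0mod, ht0div2, ht0div]
    by_cases houter : (i:ℕ) / 2^(fuel+1) = (j:ℕ) / 2^(fuel+1)
    · rw [if_pos (And.intro houter trivial), if_pos houter, ← pow_add]
      have him : (i:ℕ) % 2^(fuel+1) = (i:ℕ)%2^fuel + 2^fuel * (((i:ℕ)/2^fuel)%2) := by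
        rw [pow_succ, Nat.mod_mul]
      have hjm : (j:ℕ) % 2^(fuel+1) = (j:ℕ)%2^fuel + 2^fuel * (((j:ℕ)/2^fuel)%2) := by
        rw [pow_succ, Nat.mod_mul]
      have hbrev : brev (fuel+1) ((j:ℕ)%2^fuel + 2^fuel * (((j:ℕ)/2^fuel)%2))
          = ((j:ℕ)/2^fuel)%2 + 2 * brev fuel ((j:ℕ)%2^fuel) :=
        brev_top fuel _ _ hjlt (Nat.mod_lt _ (by norm_num))
      have hpow1 : (2:ℕ)^(m-1) = 2^k * 2^fuel := by
        rw [← pow_add]; congr 1; omega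
      have hpow2 : (2:ℕ)^m = 2^k * 2^fuel * 2 := by
        rw [mul_assoc, ← pow_succ, ← pow_add]; congr 1; omega
      have hpow3 : (2:ℕ)^(k+1) = 2^k * 2 := by rw [pow_succ]
      have h1' : ζ ^ (2^k * 2^fuel * 2) = 1 := by rw [← hpow2]; exact h1
      have hexp : 2^k * ((i:ℕ) % 2^(fuel+1)) * brev (fuel+1) ((j:ℕ) % 2^(fuel+1))
          = (2^k * ((i:ℕ)%2^fuel) * (((j:ℕ)/2^fuel)%2)
              + 2^(m-1) * (((i:ℕ)/2^fuel)%2) * (((j:ℕ)/2^fuel)%2)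
              + 2^(k+1) * ((i:ℕ)%2^fuel) * brev fuel ((j:ℕ)%2^fuel))
            + (2^k * 2^fuel * 2) * ((((i:ℕ)/2^fuel)%2) * brev fuel ((j:ℕ)%2^fuel)) := by
        rw [him, hjm, hbrev, hpow1, hpow3]; ring
      conv_rhs => rw [hexp, pow_add, pow_mul]
      rw [h1', one_pow, mul_one]
    · rw [if_neg (fun hc => houter hc.1), if_neg houter, zero_mul]

lemma bf_congr (m : ℕ) (ζ : ℂ) {a b : ℕ} (h : a = b) : bf m a ζ = bf m b ζ := by rw [h]

lemma bfl_eq_prod (m : ℕ) (ζ : ℂ) :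
    ∀ fuel k, bfl m ζ fuel k = (List.ofFn fun t : Fin fuel => bf m (k + (t:ℕ)) ζ).prod
  | 0, k => by simp [bfl_zero]
  | fuel+1, k => by
    rw [bfl_succ, List.ofFn_succ, List.prod_cons, bfl_eq_prod m ζ fuel (k+1)]
    have h1 : bf m k ζ = bf m (k + ((0 : Fin (fuel+1)):ℕ)) ζ :=
      bf_congr m ζ (by simp)
    have h2 : (fun t : Fin fuel => bf m (k + 1 + (t:ℕ)) ζ)
        = fun t : Fin fuel => bf m (k + ((t.succ : Fin (fuel+1)):ℕ)) ζ := by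
      funext t
      exact bf_congr m ζ (by simp [Fin.val_succ]; omega)
    rw [h1, h2]

lemma bfl_isButterflyMatrix (m : ℕ) (ζ : ℂ) : IsButterflyMatrix m (bfl m ζ m 0) :=
  ⟨fun k => bf m (k:ℕ) ζ, fun k => bf_isButterflyFactor m k k.isLt ζ, by
    rw [bfl_eq_prod]
    have h2 : (fun t : Fin m => bf m (0 + (t:ℕ)) ζ) = fun t : Fin m => bf m (t:ℕ) ζ := by
      funext t
      exact bf_congr m ζ (by simp)
    rw [h2]⟩

lemma isButterflyMatrix_mul_diagonal (m' : ℕ) (B : Matrix (Fin (2^(m'+1))) (Fin (2^(m'+1))) ℂ)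
    (hB : IsButterflyMatrix (m'+1) B) (dd : Fin (2^(m'+1)) → ℂ) :
    IsButterflyMatrix (m'+1) (B * Matrix.diagonal dd) := by
  obtain ⟨M, hM, rfl⟩ := hB
  refine ⟨fun k => if k = Fin.last m' then M k * Matrix.diagonal dd else M k, ?_, ?_⟩
  · intro k
    dsimp only
    split_ifs with hk
    · intro i j h1 h2
      rw [Matrix.mul_diagonal, hM k i j h1 h2, zero_mul]
    · exact hM k
  · rw [List.ofFn_succ', List.ofFn_succ']
    simp only [List.prod_concat]
    have h1 : (fun t : Fin m' => (fun k => if k = Fin.last m' then M k * Matrix.diagonal dd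
        else M k) t.castSucc) = fun t : Fin m' => M t.castSucc := by
      funext t
      exact if_neg (Fin.ne_last_of_lt (Fin.castSucc_lt_last t))
    rw [h1, if_pos trivial, mul_assoc]

/-- the bit reversal permutation -/
def brevPerm (m : ℕ) : Equiv.Perm (Fin (2^m)) :=
  Function.Involutive.toPerm (fun i => ⟨brev m i, brev_lt m i⟩)
    (fun i => by
      ext
      exact brev_brev m (i:ℕ) i.isLt)

lemma brevPerm_apply (m : ℕ) (i : Fin (2^m)) : (brevPerm m i : ℕ) = brev m (i:ℕ) := rfl

lemma brevPerm_inv (m : ℕ) : (brevPerm m)⁻¹ = brevPerm m := rfl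

lemma permMatrix_apply {n : Type*} [DecidableEq n] (σ : Equiv.Perm n) (i j : n) :
    σ.permMatrix ℂ i j = if σ i = j then 1 else 0 := by
  simp [Equiv.Perm.permMatrix, PEquiv.toMatrix, Equiv.toPEquiv, Option.mem_def]

lemma mul_permMatrix {n : Type*} [DecidableEq n] [Fintype n] (σ : Equiv.Perm n)
    (M : Matrix n n ℂ) (i j : n) : (M * σ.permMatrix ℂ) i j = M i (σ⁻¹ j) := by
  rw [Matrix.mul_apply]
  rw [Finset.sum_eq_single (σ⁻¹ j)]
  · rw [permMatrix_apply, if_pos (by simp), mul_one]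
  · intro t _ ht
    rw [permMatrix_apply, if_neg (fun hc => ht (by rw [← hc]; simp)), mul_zero]
  · intro hmem
    exact absurd (Finset.mem_univ _) hmem

lemma diag_perm_comm {n : Type*} [DecidableEq n] [Fintype n] (σ : Equiv.Perm n) (d : n → ℂ) :
    Matrix.diagonal (fun t => d (σ t)) * σ.permMatrix ℂ = σ.permMatrix ℂ * Matrix.diagonal d := by
  ext i j
  rw [Matrix.diagonal_mul, Matrix.mul_diagonal, permMatrix_apply]
  by_cases hc : σ i = j
  · rw [if_pos hc, hc, mul_one, one_mul]
  · rw [if_neg hc, mul_zero, zero_mul]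

lemma root_sum (N : ℕ) (hN : 0 < N) (ζ : ℂ) (hprim : IsPrimitiveRoot ζ N) (c : ℕ) :
    ∑ t : Fin N, ζ^(c*(t:ℕ)) = if N ∣ c then (N:ℂ) else 0 := by
  have hpm : ∀ t : ℕ, ζ^(c*t) = (ζ^c)^t := fun t => by rw [pow_mul]
  simp_rw [hpm]
  rw [Fin.sum_univ_eq_sum_range (fun t => (ζ^c)^t) N]
  split_ifs with hd
  · have hone : ζ^c = 1 := (hprim.pow_eq_one_iff_dvd c).mpr hd
    simp [hone]
  · have hne : ζ^c ≠ 1 := fun e => hd ((hprim.pow_eq_one_iff_dvd c).mp e)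
    rw [geom_sum_eq hne]
    have hcn : (ζ^c)^N = 1 := by
      rw [← pow_mul, mul_comm, pow_mul, hprim.pow_eq_one, one_pow]
    rw [hcn]
    simp

lemma bfl_perm_apply (m : ℕ) (z : ℂ) (hz : z^(2^m) = 1) (i j : Fin (2^m)) :
    (bfl m z m 0 * (brevPerm m).permMatrix ℂ) i j = z^((i:ℕ)*(j:ℕ)) := by
  rw [mul_permMatrix, brevPerm_inv, bfl_apply m z hz m 0 (by omega)]
  rw [if_pos (by rw [Nat.div_eq_of_lt i.isLt, Nat.div_eq_of_lt (brevPerm m j).isLt])]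
  rw [Nat.mod_eq_of_lt i.isLt, Nat.mod_eq_of_lt (brevPerm m j).isLt]
  rw [brevPerm_apply, brev_brev m _ j.isLt, pow_zero, one_mul]

lemma isButterflyMatrix_mul_diagonal' (m : ℕ) (hm : 1 ≤ m)
    (B : Matrix (Fin (2^m)) (Fin (2^m)) ℂ) (hB : IsButterflyMatrix m B)
    (dd : Fin (2^m) → ℂ) : IsButterflyMatrix m (B * Matrix.diagonal dd) := by
  obtain ⟨m', rfl⟩ : ∃ m', m = m' + 1 := ⟨m - 1, by omega⟩
  exact isButterflyMatrix_mul_diagonal m' B hB dd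

theorem circulant_mem_BPBP' (m : ℕ) (hm : 1 ≤ m) (h : ZMod (2 ^ m) → ℂ) :
    ∃ (B₁ B₂ : Matrix (Fin (2 ^ m)) (Fin (2 ^ m)) ℂ) (σ₁ σ₂ : Equiv.Perm (Fin (2 ^ m))),
      IsButterflyMatrix m B₁ ∧ IsButterflyMatrix m B₂ ∧
      (Matrix.of fun i j : Fin (2 ^ m) =>
          h (((i : ℕ) : ZMod (2 ^ m)) - ((j : ℕ) : ZMod (2 ^ m)))) =
        B₁ * σ₁.permMatrix ℂ * B₂ * σ₂.permMatrix ℂ := by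
  have hN : (0:ℕ) < 2^m := Nat.two_pow_pos m
  have hNC : ((2^m : ℕ) : ℂ) ≠ 0 := Nat.cast_ne_zero.mpr (by omega)
  set ζ : ℂ := Complex.exp (2 * Real.pi * Complex.I / (2^m : ℕ)) with hζdef
  have hprim : IsPrimitiveRoot ζ (2^m) := Complex.isPrimitiveRoot_exp _ (by omega)
  have h1 : ζ^(2^m) = 1 := hprim.pow_eq_one
  set ζ' : ℂ := ζ^(2^m - 1) with hζ'def
  have hcop : (2^m - 1).Coprime (2^m) := by
    have he : 2^m - 1 + 1 = 2^m := by omega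
    have h2 : Nat.gcd (2^m - 1 + 1) (2^m - 1) = Nat.gcd 1 (2^m - 1) := by
      rw [Nat.add_comm, Nat.gcd_add_self_left]
    rw [he] at h2
    have h3 : Nat.Coprime (2^m) (2^m - 1) := by simpa [Nat.Coprime] using h2
    exact h3.symm
  have hprim' : IsPrimitiveRoot ζ' (2^m) := hprim.pow_of_coprime _ hcop
  have h1' : ζ'^(2^m) = 1 := hprim'.pow_eq_one
  -- the diagonal entries (normalized DFT of h)
  set dd : Fin (2^m) → ℂ := fun t =>
    (∑ j : Fin (2^m), h (((j:ℕ) : ZMod (2^m))) * ζ'^((j:ℕ)*(t:ℕ))) / ((2^m : ℕ):ℂ)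
    with hdddef
  set σ : Equiv.Perm (Fin (2^m)) := brevPerm m with hσdef
  refine ⟨bfl m ζ m 0 * Matrix.diagonal (fun t => dd (σ t)), bfl m ζ' m 0, σ, σ,
    isButterflyMatrix_mul_diagonal' m hm _ (bfl_isButterflyMatrix m ζ) _,
    bfl_isButterflyMatrix m ζ', ?_⟩
  -- the key summation identity
  have stepB : ∀ a b : Fin (2^m),
      (∑ t : Fin (2^m), ζ^((a:ℕ)*(t:ℕ)) * dd t * ζ'^((t:ℕ)*(b:ℕ)))
        = h (((a:ℕ) : ZMod (2^m)) - ((b:ℕ) : ZMod (2^m))) := by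
    intro a b
    set x : ZMod (2^m) := ((a:ℕ) : ZMod (2^m)) - ((b:ℕ) : ZMod (2^m)) with hxdef
    have : NeZero (2^m) := ⟨by omega⟩
    set j₀ : Fin (2^m) := ⟨x.val, ZMod.val_lt x⟩ with hj₀def
    have e1 : ∀ t : Fin (2^m), ζ^((a:ℕ)*(t:ℕ)) * dd t * ζ'^((t:ℕ)*(b:ℕ))
        = (∑ j : Fin (2^m), h (((j:ℕ) : ZMod (2^m)))
            * ζ^(((a:ℕ) + (2^m - 1)*((j:ℕ) + (b:ℕ))) * (t:ℕ))) / ((2^m:ℕ):ℂ) := by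
      intro t
      rw [hdddef]
      simp only []
      rw [show ζ^((a:ℕ)*(t:ℕ)) * ((∑ j : Fin (2^m), h (((j:ℕ) : ZMod (2^m)))
            * ζ'^((j:ℕ)*(t:ℕ))) / ((2^m:ℕ):ℂ)) * ζ'^((t:ℕ)*(b:ℕ))
          = (ζ^((a:ℕ)*(t:ℕ)) * (∑ j : Fin (2^m), h (((j:ℕ) : ZMod (2^m)))
            * ζ'^((j:ℕ)*(t:ℕ))) * ζ'^((t:ℕ)*(b:ℕ))) / ((2^m:ℕ):ℂ) from by ring]
      congr 1
      rw [Finset.mul_sum, Finset.sum_mul]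
      apply Finset.sum_congr rfl
      intro j _
      have hps : ∀ x y : ℕ, ζ'^(x*y) = ζ^((2^m-1)*(x*y)) := by
        intro x y
        rw [hζ'def, ← pow_mul]
      rw [hps, hps]
      have hexp : (a:ℕ)*(t:ℕ) + ((2^m-1)*((j:ℕ)*(t:ℕ)) + (2^m-1)*((t:ℕ)*(b:ℕ)))
          = ((a:ℕ) + (2^m - 1)*((j:ℕ) + (b:ℕ))) * (t:ℕ) := by ring
      rw [← hexp, pow_add, pow_add]
      ring
    rw [Finset.sum_congr rfl (fun t _ => e1 t), ← Finset.sum_div]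
    rw [Finset.sum_comm]
    have e2 : ∀ j : Fin (2^m),
        (∑ t : Fin (2^m), h (((j:ℕ) : ZMod (2^m)))
            * ζ^(((a:ℕ) + (2^m - 1)*((j:ℕ) + (b:ℕ))) * (t:ℕ)))
          = h (((j:ℕ) : ZMod (2^m)))
            * (if (2^m : ℕ) ∣ ((a:ℕ) + (2^m - 1)*((j:ℕ) + (b:ℕ))) then ((2^m:ℕ):ℂ) else 0) := by
      intro j
      rw [← Finset.mul_sum, root_sum (2^m) hN ζ hprim]
    rw [Finset.sum_congr rfl (fun j _ => e2 j)]
    have hdvd : ∀ j : Fin (2^m),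
        ((2^m : ℕ) ∣ ((a:ℕ) + (2^m - 1)*((j:ℕ) + (b:ℕ)))) ↔ j = j₀ := by
      intro j
      rw [← ZMod.natCast_eq_zero_iff _ (2^m)]
      push_cast [Nat.cast_sub (Nat.one_le_two_pow : 1 ≤ 2^m)]
      have hz2 : ((2:ZMod (2^m)))^m = 0 := by
        have h22 : ((2^m : ℕ) : ZMod (2^m)) = 0 := ZMod.natCast_self _
        push_cast at h22
        exact h22
      rw [hz2]
      constructor
      · intro hz
        have hj : ((j:ℕ) : ZMod (2^m)) = x := by
          rw [hxdef]
          linear_combination -hz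
        have : (j:ℕ) = x.val := by
          rw [← hj, ZMod.val_natCast_of_lt j.isLt]
        exact Fin.ext this
      · intro hj
        subst hj
        have hj : ((j₀:ℕ) : ZMod (2^m)) = x := by
          rw [hj₀def]
          simp only []
          rw [ZMod.natCast_val, ZMod.cast_id]
        rw [hj, hxdef]
        ring
    have e3 : ∀ j : Fin (2^m),
        h (((j:ℕ) : ZMod (2^m)))
            * (if (2^m : ℕ) ∣ ((a:ℕ) + (2^m - 1)*((j:ℕ) + (b:ℕ))) then ((2^m:ℕ):ℂ) else 0)
          = if j = j₀ then h (((j:ℕ) : ZMod (2^m))) * ((2^m:ℕ):ℂ) else 0 := by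
      intro j
      rw [mul_ite, mul_zero]
      by_cases hc : j = j₀
      · rw [if_pos ((hdvd j).mpr hc), if_pos hc]
      · rw [if_neg (fun hd => hc ((hdvd j).mp hd)), if_neg hc]
    rw [Finset.sum_congr rfl (fun j _ => e3 j), Finset.sum_ite_eq' Finset.univ j₀]
    rw [if_pos (Finset.mem_univ _)]
    rw [mul_div_assoc, div_self hNC, mul_one]
    congr 1
    rw [hj₀def]
    simp only []
    rw [ZMod.natCast_val, ZMod.cast_id]
  -- matrix assembly
  have hFD : ∀ a t : Fin (2^m),
      ((bfl m ζ m 0 * σ.permMatrix ℂ) * Matrix.diagonal dd) a t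
        = ζ^((a:ℕ)*(t:ℕ)) * dd t := by
    intro a t
    rw [Matrix.mul_diagonal, bfl_perm_apply m ζ h1]
  have hG : ∀ t b : Fin (2^m),
      (bfl m ζ' m 0 * σ.permMatrix ℂ) t b = ζ'^((t:ℕ)*(b:ℕ)) :=
    fun t b => bfl_perm_apply m ζ' h1' t b
  have hC : (Matrix.of fun i j : Fin (2 ^ m) =>
          h (((i : ℕ) : ZMod (2 ^ m)) - ((j : ℕ) : ZMod (2 ^ m))))
      = ((bfl m ζ m 0 * σ.permMatrix ℂ) * Matrix.diagonal dd)
          * (bfl m ζ' m 0 * σ.permMatrix ℂ) := by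
    ext a b
    rw [Matrix.mul_apply]
    rw [Finset.sum_congr rfl (fun t _ => by rw [hFD a t, hG t b])]
    rw [stepB a b]
    rfl
  rw [hC]
  have hassoc : (bfl m ζ m 0) * σ.permMatrix ℂ * Matrix.diagonal dd
      = (bfl m ζ m 0) * Matrix.diagonal (fun t => dd (σ t)) * σ.permMatrix ℂ := by
    rw [Matrix.mul_assoc, Matrix.mul_assoc, diag_perm_comm]
  simp only [← Matrix.mul_assoc]
  rw [hassoc]

/-- **Every circulant matrix of size `2^m` lies in the class (BP)².**  For `N = 2^m` and any
`h : ZMod N → ℂ`, the circulant matrix `C_{i,j} = h(i−j)` (indices identified with `Fin N`)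
factors as `B₁ · P₁ · B₂ · P₂` with `B₁, B₂` butterfly matrices and `P₁, P₂` permutation
matrices. -/
theorem circulant_mem_BPBP (m : ℕ) (hm : 1 ≤ m) (h : ZMod (2 ^ m) → ℂ) :
    ∃ (B₁ B₂ : Matrix (Fin (2 ^ m)) (Fin (2 ^ m)) ℂ) (σ₁ σ₂ : Equiv.Perm (Fin (2 ^ m))),
      IsButterflyMatrix m B₁ ∧ IsButterflyMatrix m B₂ ∧
      (Matrix.of fun i j : Fin (2 ^ m) =>
          h (((i : ℕ) : ZMod (2 ^ m)) - ((j : ℕ) : ZMod (2 ^ m)))) =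
        B₁ * σ₁.permMatrix ℂ * B₂ * σ₂.permMatrix ℂ := by
  exact circulant_mem_BPBP' m hm h
end

section
/- Let m ≥ 1 and N = 2^m, and let C ∈ ℝ^{N×N} be the DCT matrix with entries C_{k,n} = cos(π·(n+1/2)·k/N). Then there exist butterfly matrices B₁, B₂ ∈ ℂ^{N×N} (each a product M_0 · M_1 ⋯ M_{m−1} of butterfly factors, where (M_k)_{i,j} = 0 whenever i ≠ j and the bitwise XOR of i and j is not equal to 2^{m−1−k}) and permutation matrices P₁, P₂ such that C equals the entrywise real part of the complex matrix B₁ · P₁ · B₂ · P₂. That is, the DCT lies in the class (BP)² up to taking the entrywise real part. -/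
namespace DctButterflyAux

open Finset


open Finset

/-- bit `b` of `j`, as a natural number. -/
def bit (j b : ℕ) : ℕ := (Nat.testBit j b).toNat

lemma bit_le_one (j b : ℕ) : bit j b ≤ 1 := by
  rw [bit]; cases Nat.testBit j b <;> simp

lemma bit_eq_bit_of_div_eq {x y d : ℕ} (h : x / 2 ^ d = y / 2 ^ d) :
    bit x d = bit y d := by
  unfold bit
  have hx : Nat.testBit x d = Nat.testBit (x / 2 ^ d) 0 := by
    rw [← Nat.shiftRight_eq_div_pow, Nat.testBit_shiftRight, Nat.add_zero]
  have hy : Nat.testBit y d = Nat.testBit (y / 2 ^ d) 0 := by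
    rw [← Nat.shiftRight_eq_div_pow, Nat.testBit_shiftRight, Nat.add_zero]
  rw [hx, hy, h]

lemma xor_cancel_left (x c : ℕ) : x ^^^ (x ^^^ c) = c := by
  rw [← Nat.xor_assoc, Nat.xor_self, Nat.zero_xor]

lemma eq_xor_of_xor_eq {x y c : ℕ} (h : x ^^^ y = c) : y = x ^^^ c := by
  rw [← h, ← Nat.xor_assoc, Nat.xor_self, Nat.zero_xor]

lemma xor_two_pow_mod {x d : ℕ} : (x ^^^ 2 ^ d) % 2 ^ d = x % 2 ^ d := by
  apply Nat.eq_of_testBit_eq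
  intro i
  simp only [Nat.testBit_mod_two_pow, Nat.testBit_xor, Nat.testBit_two_pow]
  by_cases hid : i < d
  · have : ¬ (d = i) := by omega
    simp [hid, this]
  · simp [hid]

lemma xor_two_pow_div_succ {x d : ℕ} : (x ^^^ 2 ^ d) / 2 ^ (d + 1) = x / 2 ^ (d + 1) := by
  apply Nat.eq_of_testBit_eq
  intro i
  rw [← Nat.shiftRight_eq_div_pow, ← Nat.shiftRight_eq_div_pow,
    Nat.testBit_shiftRight, Nat.testBit_shiftRight, Nat.testBit_xor,
    Nat.testBit_two_pow]
  have : ¬ (d = d + 1 + i) := by omega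
  simp [this]

lemma xor_two_pow_div {x d : ℕ} : (x ^^^ 2 ^ d) / 2 ^ d = (x / 2 ^ d) ^^^ 1 := by
  apply Nat.eq_of_testBit_eq
  intro i
  rw [← Nat.shiftRight_eq_div_pow, Nat.testBit_shiftRight, Nat.testBit_xor,
    Nat.testBit_xor, ← Nat.shiftRight_eq_div_pow, Nat.testBit_shiftRight,
    Nat.testBit_two_pow]
  have h1 : Nat.testBit 1 i = decide (i = 0) := by
    have : (1 : ℕ) = 2 ^ 0 := rfl
    rw [this, Nat.testBit_two_pow]
    simp [eq_comm]
  rw [h1]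
  congr 1
  simp only [decide_eq_decide]
  omega

lemma xor_one_ne (a : ℕ) : a ^^^ 1 ≠ a := by
  intro h
  have := congrArg (fun z => a ^^^ z) h.symm
  simp only [xor_cancel_left, Nat.xor_self] at this
  simp at this

lemma eq_or_xor_one_eq_of_div_two_eq {a c : ℕ} (h : a / 2 = c / 2) :
    a = c ∨ a ^^^ 1 = c := by
  by_cases hm : a % 2 = c % 2
  · left; omega
  · right
    apply Nat.eq_of_testBit_eq
    intro i
    cases i with
    | zero =>
      rw [Nat.testBit_xor]
      have h1 : Nat.testBit 1 0 = true := by decide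
      rw [h1, Nat.testBit_zero, Nat.testBit_zero]
      have ha := Nat.mod_two_eq_zero_or_one a
      have hc := Nat.mod_two_eq_zero_or_one c
      rcases ha with ha | ha <;> rcases hc with hc | hc <;> simp_all
    | succ i =>
      rw [Nat.testBit_xor]
      have h1 : Nat.testBit 1 (i + 1) = false := by
        have : (1:ℕ) = 2 ^ 0 := rfl
        rw [this, Nat.testBit_two_pow]; simp
      rw [h1, Nat.testBit_add_one, Nat.testBit_add_one, h]
      simp



open Finset

/-- partial bit-reversal sum -/
def rv (m t j : ℕ) : ℕ := ∑ k ∈ Finset.Ico t m, 2 ^ k * bit j (m - 1 - k)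

lemma bit_le_one' (j b : ℕ) : bit j b ≤ 1 := by
  rw [bit]; cases Nat.testBit j b <;> simp

lemma sum_two_pow (m : ℕ) : ∑ k ∈ Finset.range m, 2 ^ k = 2 ^ m - 1 := by
  induction m with
  | zero => simp
  | succ n ih =>
    rw [Finset.sum_range_succ, ih]
    have h1 : 1 ≤ 2 ^ n := Nat.one_le_two_pow
    have h2 : 2 ^ (n + 1) = 2 * 2 ^ n := by rw [pow_succ]; ring
    omega

lemma rv_lt (m t j : ℕ) : rv m t j < 2 ^ m := by
  have h1 : rv m t j ≤ ∑ k ∈ Finset.range m, 2 ^ k := by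
    calc rv m t j ≤ ∑ k ∈ Finset.Ico t m, 2 ^ k := by
          apply Finset.sum_le_sum
          intro k _
          calc 2 ^ k * bit j (m - 1 - k) ≤ 2 ^ k * 1 :=
                Nat.mul_le_mul_left _ (bit_le_one' _ _)
            _ = 2 ^ k := by ring
      _ ≤ ∑ k ∈ Finset.range m, 2 ^ k := by
          rw [Finset.range_eq_Ico]
          apply Finset.sum_le_sum_of_subset
          apply Finset.Ico_subset_Ico <;> omega
  rw [sum_two_pow] at h1
  have : 1 ≤ 2 ^ m := Nat.one_le_two_pow
  omega

lemma two_pow_dvd_rv (m t j : ℕ) : 2 ^ t ∣ rv m t j := by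
  apply Finset.dvd_sum
  intro k hk
  rw [Finset.mem_Ico] at hk
  exact dvd_mul_of_dvd_left (pow_dvd_pow 2 hk.1) _

lemma rv_succ_bot {m t : ℕ} (h : t < m) (j : ℕ) :
    rv m t j = 2 ^ t * bit j (m - 1 - t) + rv m (t + 1) j :=
  Finset.sum_eq_sum_Ico_succ_bot h _

lemma testBit_rv (m : ℕ) : ∀ d t, m = t + d → ∀ j i,
    (rv m t j).testBit i =
      (decide (t ≤ i) && decide (i < m) && j.testBit (m - 1 - i)) := by
  intro d
  induction d with
  | zero =>
    intro t ht j i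
    have he : Finset.Ico t m = ∅ := by rw [Finset.Ico_eq_empty_iff]; omega
    rw [rv, he]
    simp only [Finset.sum_empty, Nat.zero_testBit]
    have : ¬ (t ≤ i ∧ i < m) := by omega
    by_cases h1 : t ≤ i <;> by_cases h2 : i < m <;> simp_all <;> omega
  | succ d ih =>
    intro t ht j i
    have htm : t < m := by omega
    rw [rv_succ_bot htm j]
    obtain ⟨q, hq⟩ := two_pow_dvd_rv m (t + 1) j
    have hrw : 2 ^ t * bit j (m - 1 - t) + rv m (t + 1) j
        = 2 ^ t * (2 * q + bit j (m - 1 - t)) := by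
      rw [hq, pow_succ]; ring
    rw [hrw, Nat.testBit_two_pow_mul]
    by_cases hti : t ≤ i
    · simp only [ge_iff_le, hti, decide_true, Bool.true_and]
      have hblt : bit j (m - 1 - t) < 2 ^ 1 := by
        have := bit_le_one' j (m - 1 - t); omega
      have h2 : (2 : ℕ) * q = 2 ^ 1 * q := by ring
      rw [h2, Nat.testBit_two_pow_mul_add q hblt]
      by_cases hit : i = t
      · subst hit
        simp only [Nat.sub_self, if_pos (by omega : i - i < 1)]
        rw [bit, Nat.testBit_bool_toNat]
        simp [htm]
      · have h1lt : ¬ (i - t < 1) := by omega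
        rw [if_neg h1lt]
        have hq' : q = rv m (t + 1) j / 2 ^ (t + 1) := by
          rw [hq]; rw [Nat.mul_div_cancel_left _ (by positivity)]
        have : q.testBit (i - t - 1) = (rv m (t + 1) j).testBit i := by
          rw [hq', ← Nat.shiftRight_eq_div_pow, Nat.testBit_shiftRight]
          congr 1
          omega
        rw [this, ih (t + 1) (by omega) j i]
        have : (t + 1 ≤ i) := by omega
        simp [this]
    · simp only [ge_iff_le, hti, decide_false, Bool.false_and]

lemma rv_inj (m : ℕ) {a b : ℕ} (ha : a < 2 ^ m) (hb : b < 2 ^ m)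
    (h : rv m 0 a = rv m 0 b) : a = b := by
  apply Nat.eq_of_testBit_eq
  intro i
  by_cases him : i < m
  · have hkey := congrArg (fun z => Nat.testBit z (m - 1 - i)) h
    rw [testBit_rv m m 0 (by omega) a (m - 1 - i),
        testBit_rv m m 0 (by omega) b (m - 1 - i)] at hkey
    have h1 : (0 : ℕ) ≤ m - 1 - i := by omega
    have h2 : m - 1 - i < m := by omega
    have h3 : m - 1 - (m - 1 - i) = i := by omega
    simp only [h3, Nat.zero_le, decide_true, h2, Bool.true_and] at hkey
    exact hkey
  · have h1 : a < 2 ^ i := lt_of_lt_of_le ha (Nat.pow_le_pow_right (by norm_num) (by omega))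
    have h2 : b < 2 ^ i := lt_of_lt_of_le hb (Nat.pow_le_pow_right (by norm_num) (by omega))
    rw [Nat.testBit_lt_two_pow h1, Nat.testBit_lt_two_pow h2]



open Finset

noncomputable def u (m : ℕ) : ℂ :=
  Complex.exp ((Real.pi / 2 ^ (m + 1) : ℝ) * Complex.I)

noncomputable def w (m : ℕ) : ℂ := u m ^ 4

lemma u_pow (m e : ℕ) :
    u m ^ e = Complex.exp (((e : ℝ) * Real.pi / 2 ^ (m + 1) : ℝ) * Complex.I) := by
  rw [u, ← Complex.exp_nat_mul]
  congr 1
  push_cast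
  ring

lemma w_pow_two_pow (m : ℕ) : w m ^ 2 ^ m = 1 := by
  rw [w, ← pow_mul, u_pow]
  have h : ((4 * 2 ^ m : ℕ) : ℝ) * Real.pi / 2 ^ (m + 1) = 2 * Real.pi := by
    have h2 : (2 : ℝ) ^ (m + 1) ≠ 0 := by positivity
    field_simp
    push_cast
    ring
  rw [h]
  have : ((2 * Real.pi : ℝ) : ℂ) * Complex.I = 2 * Real.pi * Complex.I := by
    push_cast; ring
  rw [this, Complex.exp_two_pi_mul_I]

lemma w_pow_congr (m : ℕ) {a b : ℕ} (h : a % 2 ^ m = b % 2 ^ m) :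
    w m ^ a = w m ^ b := by
  have key : ∀ c : ℕ, w m ^ c = w m ^ (c % 2 ^ m) := by
    intro c
    conv_lhs => rw [← Nat.div_add_mod c (2 ^ m)]
    rw [pow_add, pow_mul, w_pow_two_pow, one_pow, one_mul]
  rw [key a, key b, h]


open Finset

/-- The level-`t` butterfly factor of the DIT FFT. -/
noncomputable def Mfac (m t : ℕ) : Matrix (Fin (2 ^ m)) (Fin (2 ^ m)) ℂ :=
  Matrix.of fun x y =>
    if (x : ℕ) ^^^ (y : ℕ) = 0 ∨ (x : ℕ) ^^^ (y : ℕ) = 2 ^ (m - 1 - t)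
    then w m ^ (2 ^ t * bit (y : ℕ) (m - 1 - t) * (x : ℕ)) else 0

lemma prod_Mfac (m : ℕ) : ∀ d t, t + d = m →
    (List.ofFn fun k : Fin d => Mfac m (t + k)).prod =
      Matrix.of (fun x j : Fin (2 ^ m) =>
        if (x : ℕ) / 2 ^ d = (j : ℕ) / 2 ^ d
        then w m ^ ((x : ℕ) * rv m t (j : ℕ)) else 0) := by
  intro d
  induction d with
  | zero =>
    intro t ht
    ext x j
    have hrv : rv m t (j : ℕ) = 0 := by
      rw [rv, show Finset.Ico t m = ∅ by rw [Finset.Ico_eq_empty_iff]; omega]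
      simp
    simp only [List.ofFn_zero, List.prod_nil, Matrix.of_apply, pow_zero,
      Nat.div_one, hrv, Nat.mul_zero]
    rw [Matrix.one_apply]
    by_cases h : x = j
    · rw [if_pos h, if_pos (by rw [h])]
    · rw [if_neg h, if_neg (fun hc => h (Fin.ext hc))]
  | succ d ih =>
    intro t ht
    have hd : m - 1 - t = d := by omega
    have hdm : d < m := by omega
    have h2d : (2 : ℕ) ^ d < 2 ^ m := Nat.pow_lt_pow_right (by norm_num) hdm
    rw [List.ofFn_succ, List.prod_cons]
    have hargval : ∀ k : Fin d, t + ((Fin.succ k) : ℕ) = (t + 1) + (k : ℕ) := by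
      intro k; rw [Fin.val_succ]; omega
    have harg : (fun k : Fin d => Mfac m (t + ((Fin.succ k) : ℕ)))
        = fun k : Fin d => Mfac m ((t + 1) + (k : ℕ)) := by
      funext k
      rw [hargval k]
    rw [show ((0 : Fin (d + 1)) : ℕ) = 0 from rfl, Nat.add_zero, harg,
      ih (t + 1) (by omega)]
    ext x j
    rw [Matrix.mul_apply]
    set xx : ℕ := (x : ℕ) ^^^ 2 ^ d with hxx
    have hxxlt : xx < 2 ^ m := Nat.xor_lt_two_pow x.isLt h2d
    set x' : Fin (2 ^ m) := ⟨xx, hxxlt⟩ with hx'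
    have hxorxx : (x : ℕ) ^^^ xx = 2 ^ d := xor_cancel_left _ _
    have hxne : x ≠ x' := by
      intro hcon
      have : (x : ℕ) = xx := congrArg Fin.val hcon
      rw [← this] at hxorxx
      rw [Nat.xor_self] at hxorxx
      exact absurd hxorxx.symm (by positivity)
    have hzero : ∀ y ∈ (Finset.univ : Finset (Fin (2 ^ m))),
        y ∉ ({x, x'} : Finset (Fin (2 ^ m))) →
        Mfac m t x y * Matrix.of (fun x j : Fin (2 ^ m) =>
          if (x : ℕ) / 2 ^ d = (j : ℕ) / 2 ^ d
          then w m ^ ((x : ℕ) * rv m (t + 1) (j : ℕ)) else 0) y j = 0 := by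
      intro y _ hy
      simp only [Finset.mem_insert, Finset.mem_singleton] at hy
      push_neg at hy
      have : Mfac m t x y = 0 := by
        rw [Mfac, Matrix.of_apply, if_neg]
        rintro (hc | hc)
        · exact hy.1 (Fin.ext ((eq_xor_of_xor_eq hc).trans (Nat.xor_zero _)).symm).symm
        · rw [hd] at hc
          exact hy.2 (Fin.ext (show (y : ℕ) = (x' : ℕ) from eq_xor_of_xor_eq hc))
      rw [this, zero_mul]
    rw [← Finset.sum_subset (Finset.subset_univ ({x, x'} : Finset (Fin (2 ^ m))))
        hzero, Finset.sum_pair hxne]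
    have hMxx : Mfac m t x x = w m ^ (2 ^ t * bit (x : ℕ) d * (x : ℕ)) := by
      rw [Mfac, Matrix.of_apply, if_pos (Or.inl (Nat.xor_self _)), hd]
    have hMxx' : Mfac m t x x' = w m ^ (2 ^ t * bit xx d * (x : ℕ)) := by
      rw [Mfac, Matrix.of_apply, hd, if_pos (Or.inr hxorxx)]
    have hdivxx : xx / 2 ^ d = ((x : ℕ) / 2 ^ d) ^^^ 1 := xor_two_pow_div
    have hdivsucc : xx / 2 ^ (d + 1) = (x : ℕ) / 2 ^ (d + 1) := xor_two_pow_div_succ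
    have hpow : (2 : ℕ) ^ (d + 1) = 2 ^ d * 2 := by rw [pow_succ]
    have hdd : ∀ z : ℕ, z / 2 ^ (d + 1) = z / 2 ^ d / 2 := by
      intro z; rw [hpow, Nat.div_div_eq_div_mul]
    simp only [Matrix.of_apply]
    rw [hMxx, hMxx']
    by_cases hc1 : (x : ℕ) / 2 ^ d = (j : ℕ) / 2 ^ d
    · have hc2 : ¬ (xx / 2 ^ d = (j : ℕ) / 2 ^ d) := by
        rw [hdivxx, ← hc1]
        exact xor_one_ne _
      rw [if_pos hc1, if_neg hc2, mul_zero, add_zero]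
      have htarget : (x : ℕ) / 2 ^ (d + 1) = (j : ℕ) / 2 ^ (d + 1) := by
        rw [hdd, hdd, hc1]
      rw [if_pos htarget, ← pow_add]
      congr 1
      rw [rv_succ_bot (by omega : t < m) (j : ℕ), hd,
        bit_eq_bit_of_div_eq hc1]
      ring
    · by_cases hc2 : xx / 2 ^ d = (j : ℕ) / 2 ^ d
      · rw [if_neg hc1, if_pos hc2, mul_zero, zero_add]
        have htarget : (x : ℕ) / 2 ^ (d + 1) = (j : ℕ) / 2 ^ (d + 1) := by
          rw [← hdivsucc, hdd xx, hdd (j : ℕ), hc2]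
        rw [if_pos htarget, ← pow_add]
        -- congruence of exponents mod 2^m
        obtain ⟨s, hs⟩ := two_pow_dvd_rv m (t + 1) (j : ℕ)
        have hbit : bit xx d = bit (j : ℕ) d := bit_eq_bit_of_div_eq hc2
        apply w_pow_congr
        show (2 ^ t * bit xx d * (x : ℕ) + xx * rv m (t + 1) (j : ℕ)) % 2 ^ m
          = ((x : ℕ) * rv m t (j : ℕ)) % 2 ^ m
        have hmodeq : xx * rv m (t + 1) (j : ℕ) ≡ (x : ℕ) * rv m (t + 1) (j : ℕ)
            [MOD 2 ^ m] := by
          have h1 : xx ≡ (x : ℕ) [MOD 2 ^ d] := xor_two_pow_mod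
          have h2 := (h1.mul_right' (c := 2 ^ (t + 1))).mul_right s
          have h3 : 2 ^ d * 2 ^ (t + 1) = 2 ^ m := by
            rw [← pow_add]; congr 1; omega
          rw [h3] at h2
          calc xx * rv m (t + 1) (j : ℕ) = xx * 2 ^ (t + 1) * s := by
                rw [hs]; ring
            _ ≡ (x : ℕ) * 2 ^ (t + 1) * s [MOD 2 ^ m] := h2
            _ = (x : ℕ) * rv m (t + 1) (j : ℕ) := by rw [hs]; ring
        have hfinal : 2 ^ t * bit xx d * (x : ℕ) + xx * rv m (t + 1) (j : ℕ)
            ≡ 2 ^ t * bit xx d * (x : ℕ) + (x : ℕ) * rv m (t + 1) (j : ℕ)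
            [MOD 2 ^ m] := Nat.ModEq.add_left _ hmodeq
        have hre : 2 ^ t * bit xx d * (x : ℕ) + (x : ℕ) * rv m (t + 1) (j : ℕ)
            = (x : ℕ) * rv m t (j : ℕ) := by
          rw [rv_succ_bot (by omega : t < m) (j : ℕ), hd, hbit]
          ring
        rw [← hre]
        exact hfinal
      · rw [if_neg hc1, if_neg hc2, mul_zero, mul_zero, add_zero]
        have htarget : ¬ ((x : ℕ) / 2 ^ (d + 1) = (j : ℕ) / 2 ^ (d + 1)) := by
          intro hcon
          rw [hdd, hdd] at hcon
          rcases eq_or_xor_one_eq_of_div_two_eq hcon with h | h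
          · exact hc1 h
          · exact hc2 (by rw [hdivxx, h])
        rw [if_neg htarget]


open Finset

lemma prod_ofFn_head {M₀ : Type*} [Monoid M₀] {n : ℕ} (hn : 0 < n) (f : Fin n → M₀)
    (h : ∀ k : Fin n, (k : ℕ) ≠ 0 → f k = 1) : (List.ofFn f).prod = f ⟨0, hn⟩ := by
  cases n with
  | zero => omega
  | succ n =>
    rw [List.ofFn_succ, List.prod_cons]
    have htail : (List.ofFn fun i : Fin n => f i.succ).prod = 1 := by
      apply List.prod_eq_one
      intro x hx
      rw [List.mem_ofFn] at hx
      obtain ⟨k, rfl⟩ := hx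
      exact h k.succ (by simp [Fin.val_succ])
    rw [htail, mul_one]
    rfl

lemma isButterflyFactor_Mfac (m : ℕ) (k : ℕ) : IsButterflyFactor m k (Mfac m k) := by
  intro i j hne hxor
  rw [Mfac, Matrix.of_apply, if_neg]
  rintro (hc | hc)
  · exact hne (Fin.ext ((eq_xor_of_xor_eq hc).trans (Nat.xor_zero _)).symm)
  · exact hxor hc

lemma isButterflyFactor_diagonal {d : Fin (2 ^ m) → ℂ} (k : ℕ) :
    IsButterflyFactor m k (Matrix.diagonal d) := by
  intro i j hne _
  exact Matrix.diagonal_apply_ne d hne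


end DctButterflyAux

open DctButterflyAux in
/-- **The DCT lies in the class (BP)² up to entrywise real part.**  For `N = 2^m`, the DCT
matrix `C_{k,n} = cos(π(n+1/2)k/N)` is the entrywise real part of a product `B₁·P₁·B₂·P₂`
of two BP matrices over `ℂ`. -/
theorem dct_mem_BPBP_re (m : ℕ) (hm : 1 ≤ m) :
    ∃ (B₁ B₂ : Matrix (Fin (2 ^ m)) (Fin (2 ^ m)) ℂ) (σ₁ σ₂ : Equiv.Perm (Fin (2 ^ m))),
      IsButterflyMatrix m B₁ ∧ IsButterflyMatrix m B₂ ∧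
      (Matrix.of fun k n : Fin (2 ^ m) =>
          Real.cos (Real.pi * ((n : ℕ) + 1 / 2) * (k : ℕ) / (2 ^ m : ℕ))) =
        (B₁ * σ₁.permMatrix ℂ * B₂ * σ₂.permMatrix ℂ).map Complex.re := by
  have hN1 : (1 : ℕ) ≤ 2 ^ m := Nat.one_le_two_pow
  obtain ⟨Mh, hMh⟩ : ∃ Mh, 2 ^ m = 2 * Mh := ⟨2 ^ (m - 1), by
    rw [← pow_succ']; congr 1; omega⟩
  -- the diagonal matrix
  set B₁ : Matrix (Fin (2 ^ m)) (Fin (2 ^ m)) ℂ :=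
    Matrix.diagonal (fun k : Fin (2 ^ m) => u m ^ (k : ℕ)) with hB₁
  -- the FFT butterfly
  set B₂ : Matrix (Fin (2 ^ m)) (Fin (2 ^ m)) ℂ :=
    Matrix.of (fun x j : Fin (2 ^ m) => w m ^ ((x : ℕ) * rv m 0 (j : ℕ))) with hB₂
  -- permutations
  set vmap : Fin (2 ^ m) → ℕ := fun n =>
    if (n : ℕ) % 2 = 0 then (n : ℕ) / 2 else 2 ^ m - 1 - (n : ℕ) / 2 with hvmap
  have hvlt : ∀ n, vmap n < 2 ^ m := by
    intro n
    have := n.isLt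
    simp only [hvmap]
    split <;> omega
  have hvinj : Function.Injective (fun n : Fin (2 ^ m) => (⟨vmap n, hvlt n⟩ : Fin (2 ^ m))) := by
    intro a b hab
    have h : vmap a = vmap b := congrArg Fin.val hab
    have ha := a.isLt
    have hb := b.isLt
    apply Fin.ext
    rw [hvmap] at h
    simp only at h
    split_ifs at h <;> omega
  have hrinj : Function.Injective (fun j : Fin (2 ^ m) => (⟨rv m 0 (j : ℕ), rv_lt m 0 _⟩ : Fin (2 ^ m))) := by
    intro a b hab
    exact Fin.ext (rv_inj m a.isLt b.isLt (congrArg Fin.val hab))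
  set e_v : Equiv.Perm (Fin (2 ^ m)) :=
    Equiv.ofBijective _ (Finite.injective_iff_bijective.mp hvinj) with he_v
  set e_r : Equiv.Perm (Fin (2 ^ m)) :=
    Equiv.ofBijective _ (Finite.injective_iff_bijective.mp hrinj) with he_r
  set σ₂ : Equiv.Perm (Fin (2 ^ m)) := (e_v.trans e_r.symm).symm with hσ₂
  have hσ₂symm : ∀ n, rv m 0 ((σ₂.symm n : Fin (2 ^ m)) : ℕ) = vmap n := by
    intro n
    have h1 : σ₂.symm n = e_r.symm (e_v n) := rfl
    have h2 : e_r (e_r.symm (e_v n)) = e_v n := e_r.apply_symm_apply _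
    have h3 : (e_r (e_r.symm (e_v n)) : ℕ) = rv m 0 ((e_r.symm (e_v n) : Fin (2 ^ m)) : ℕ) := rfl
    have h4 : ((e_v n : Fin (2 ^ m)) : ℕ) = vmap n := rfl
    rw [h1, ← h3, h2, h4]
  refine ⟨B₁, B₂, 1, σ₂, ?_, ?_, ?_⟩
  · -- B₁ is butterfly
    refine ⟨fun k : Fin m => if (k : ℕ) = 0 then B₁ else 1, fun k => ?_, ?_⟩
    · dsimp only
      by_cases hk : (k : ℕ) = 0
      · rw [if_pos hk, hB₁]; exact isButterflyFactor_diagonal _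
      · rw [if_neg hk, ← Matrix.diagonal_one]; exact isButterflyFactor_diagonal _
    · rw [prod_ofFn_head hm _ (fun k hk => if_neg hk)]
      norm_num
  · -- B₂ is butterfly
    refine ⟨fun k : Fin m => Mfac m (k : ℕ), fun k => isButterflyFactor_Mfac m _, ?_⟩
    have h0 : (List.ofFn fun k : Fin m => Mfac m (k : ℕ))
        = List.ofFn fun k : Fin m => Mfac m (0 + (k : ℕ)) := by
      congr 1; funext k; rw [Nat.zero_add]
    rw [h0, prod_Mfac m m 0 (by omega)]
    ext x j
    have hx0 : (x : ℕ) / 2 ^ m = 0 := Nat.div_eq_of_lt x.isLt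
    have hj0 : (j : ℕ) / 2 ^ m = 0 := Nat.div_eq_of_lt j.isLt
    rw [hB₂]
    simp only [Matrix.of_apply]
    rw [if_pos (by rw [hx0, hj0])]
  · -- matrix identity
    have hperm1 : (1 : Equiv.Perm (Fin (2 ^ m))).permMatrix ℂ = 1 := by
      rw [Equiv.Perm.permMatrix, Equiv.Perm.one_def, Equiv.toPEquiv_refl,
        PEquiv.toMatrix_refl]
    rw [hperm1, mul_one]
    rw [Equiv.Perm.permMatrix, PEquiv.mul_toMatrix_toPEquiv]
    ext k n
    rw [Matrix.map_apply, Matrix.submatrix_apply, id_def, Matrix.of_apply]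
    rw [hB₁, Matrix.diagonal_mul, hB₂, Matrix.of_apply]
    rw [hσ₂symm n]
    -- collapse powers of u
    have hw : w m ^ ((k : ℕ) * vmap n) = u m ^ (4 * ((k : ℕ) * vmap n)) := by
      rw [w, ← pow_mul]
    rw [hw, ← pow_add, u_pow]
    rw [Complex.exp_ofReal_mul_I_re]
    -- now a cosine identity
    set a : ℕ := (n : ℕ) / 2 with ha
    have hn := n.isLt
    have hk' := k.isLt
    have h2m1 : (2 : ℝ) ^ (m + 1) = 2 * 2 ^ m := by rw [pow_succ]; ring
    have h2mne : (2 : ℝ) ^ m ≠ 0 := by positivity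
    rcases Nat.mod_two_eq_zero_or_one (n : ℕ) with hpar | hpar
    · -- even : n = 2a, vmap n = a
      have hvn : vmap n = a := by rw [hvmap]; simp only [hpar]; rfl
      have hna : (n : ℕ) = 2 * a := by omega
      rw [hvn]
      congr 1
      rw [hna]
      push_cast
      field_simp
      ring
    · -- odd : n = 2a+1, vmap n = 2^m - 1 - a
      have hna : (n : ℕ) = 2 * a + 1 := by omega
      set c : ℕ := 2 ^ m - 1 - a with hc
      have hvn : vmap n = c := by rw [hvmap]; simp [hpar]; rfl
      have hac : a + c + 1 = 2 ^ m := by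
        have : a < 2 ^ m := by omega
        omega
      have hcr : (c : ℝ) = 2 ^ m - 1 - a := by
        have : ((a + c + 1 : ℕ) : ℝ) = ((2 ^ m : ℕ) : ℝ) := by rw [hac]
        push_cast at this
        linarith
      rw [hvn]
      have hangle : (((k : ℕ) + 4 * ((k : ℕ) * c) : ℕ) : ℝ) * Real.pi / 2 ^ (m + 1)
          = ((k : ℕ) : ℤ) * (2 * Real.pi)
            - ((k : ℕ) * (4 * a + 3) : ℝ) * Real.pi / 2 ^ (m + 1) := by
        push_cast
        rw [hcr]
        field_simp
        ring
      rw [hangle, Real.cos_int_mul_two_pi_sub]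
      congr 1
      rw [hna]
      push_cast
      field_simp
      ring
end

section
/- Let m ≥ 1 and N = 2^m, and let S ∈ ℝ^{N×N} be the DST matrix with entries S_{k,n} = sin(π·(n+1/2)·(k+1)/N). Then there exist butterfly matrices B₁, B₂ ∈ ℂ^{N×N} (each a product M_0 · M_1 ⋯ M_{m−1} of butterfly factors, where (M_k)_{i,j} = 0 whenever i ≠ j and the bitwise XOR of i and j is not equal to 2^{m−1−k}) and permutation matrices P₁, P₂ such that S equals the entrywise real part of the complex matrix B₁ · P₁ · B₂ · P₂. That is, the DST lies in the class (BP)² up to taking the entrywise real part. -/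
/-!
Put `θ_k = π(k+1)/2^(m+1)` and `ω = exp(-2πi/2^m)`, so that `S_{k,n} = sin((2n+1)θ_k)` and
`ω^(k+1) = exp(-4iθ_k)`. With `τ(n) = n/2` for even `n` and `τ(n) = 2^m - (n+1)/2` for odd `n`,
the number `i·exp(-iθ_k)·ω^((k+1)τ(n))·(-1)^n` is `i·exp(-i(2n+1)θ_k)` for even `n` and its
complex conjugate for odd `n`; either way its real part is `S_{k,n}`. Hence `S` is the real part of
`D · F · diag(±1) · P`, where `D` is diagonal, `P` permutes columns by `τ` followed by bit
reversal, and `F = (ω^((k+1)·rev(j)))` is the shifted DFT with bit-reversed columns. The radix-2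
(Cooley–Tukey) recursion factors `F` into one butterfly factor per level.
-/

open Complex

noncomputable def dftRoot (t : ℕ) : ℂ := exp (-(2 * Real.pi * I) / 2 ^ t)

lemma dftRoot_succ_sq (t : ℕ) : dftRoot (t + 1) ^ 2 = dftRoot t := by
  rw [dftRoot, dftRoot, ← exp_nat_mul, pow_succ]
  congr 1
  field_simp
  push_cast
  ring

lemma dftRoot_succ_pow_two_mul (t a : ℕ) : dftRoot (t + 1) ^ (2 * a) = dftRoot t ^ a := by
  rw [pow_mul, dftRoot_succ_sq]

lemma dftRoot_pow_two_pow (t : ℕ) : dftRoot t ^ 2 ^ t = 1 := by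
  induction t with
  | zero => simp [dftRoot, exp_neg]
  | succ t ih => rw [pow_succ, pow_mul', dftRoot_succ_sq, ih]

lemma dftRoot_pow_congr {t a b : ℕ} (h : a ≡ b [MOD 2 ^ t]) : dftRoot t ^ a = dftRoot t ^ b :=
  pow_eq_pow_of_modEq h (dftRoot_pow_two_pow t)

def bitRev (q x : ℕ) : ℕ := (BitVec.ofNat q x).reverse.toNat

lemma bitRev_lt (q x : ℕ) : bitRev q x < 2 ^ q := BitVec.isLt _

lemma bitRev_zero_left (x : ℕ) : bitRev 0 x = 0 := Nat.lt_one_iff.mp (bitRev_lt 0 x)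

lemma bitRev_succ (q x : ℕ) : bitRev (q + 1) x = x / 2 ^ q % 2 + 2 * bitRev q x := by
  simp only [bitRev, BitVec.reverse, BitVec.toNat_concat, BitVec.truncate_eq_setWidth,
    BitVec.setWidth_ofNat_of_le (Nat.le_succ q), BitVec.msb_eq_getLsbD_last, BitVec.getLsbD_ofNat,
    Nat.add_sub_cancel, Nat.lt_succ_self, decide_true, Bool.true_and, Nat.toNat_testBit]
  ring

lemma bitRev_bitRev {q x : ℕ} (hx : x < 2 ^ q) : bitRev q (bitRev q x) = x := by
  rw [bitRev, bitRev, BitVec.ofNat_toNat, BitVec.setWidth_eq, BitVec.reverse_reverse_eq,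
    BitVec.toNat_ofNat, Nat.mod_eq_of_lt hx]

def bitRevPerm (m : ℕ) : Equiv.Perm (Fin (2 ^ m)) :=
  Function.Involutive.toPerm (fun x => ⟨bitRev m x, bitRev_lt m x⟩)
    fun x => Fin.ext (bitRev_bitRev x.isLt)

theorem Nat.xor_eq_two_pow_of_div_eq_of_mod_eq {p i j : ℕ}
    (hdiv : i / 2 ^ (p + 1) = j / 2 ^ (p + 1)) (hmod : i % 2 ^ p = j % 2 ^ p) (hne : i ≠ j) :
    i ^^^ j = 2 ^ p := by
  have hother : ∀ t ≠ p, i.testBit t = j.testBit t := fun t ht => by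
    rcases ht.lt_or_gt with ht | ht
    · simpa [Nat.testBit_mod_two_pow, ht] using congrArg (Nat.testBit · t) hmod
    · simpa [Nat.testBit_div_two_pow, Nat.sub_add_cancel ht] using
        congrArg (Nat.testBit · (t - (p + 1))) hdiv
  have hp : i.testBit p ≠ j.testBit p := fun hp => hne <| Nat.eq_of_testBit_eq fun t => by
    rcases eq_or_ne t p with rfl | ht
    exacts [hp, hother t ht]
  refine Nat.eq_of_testBit_eq fun t => ?_
  rw [Nat.testBit_xor, Nat.testBit_two_pow]
  rcases eq_or_ne t p with rfl | ht
  · simpa using hp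
  · simp [hother t ht, ht.symm]

lemma isButterflyFactor_one {𝔽 : Type*} [Zero 𝔽] [One 𝔽] (m k : ℕ) :
    IsButterflyFactor m k (1 : Matrix (Fin (2 ^ m)) (Fin (2 ^ m)) 𝔽) :=
  fun _ _ hne _ => Matrix.one_apply_ne hne

lemma IsButterflyFactor.mul_diagonal {𝔽 : Type*} [NonUnitalNonAssocSemiring 𝔽] {m k : ℕ}
    {M : Matrix (Fin (2 ^ m)) (Fin (2 ^ m)) 𝔽} (hM : IsButterflyFactor m k M)
    (d : Fin (2 ^ m) → 𝔽) : IsButterflyFactor m k (M * Matrix.diagonal d) :=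
  fun i j hne hxor => by rw [Matrix.mul_diagonal, hM i j hne hxor, zero_mul]

lemma isButterflyMatrix_one {𝔽 : Type*} [Semiring 𝔽] (m : ℕ) :
    IsButterflyMatrix m (1 : Matrix (Fin (2 ^ m)) (Fin (2 ^ m)) 𝔽) :=
  ⟨fun _ => 1, fun k => isButterflyFactor_one m k, by simp⟩

lemma IsButterflyMatrix.mul_diagonal {𝔽 : Type*} [Semiring 𝔽] {m : ℕ} (hm : 1 ≤ m)
    {B : Matrix (Fin (2 ^ m)) (Fin (2 ^ m)) 𝔽} (hB : IsButterflyMatrix m B)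
    (d : Fin (2 ^ m) → 𝔽) : IsButterflyMatrix m (B * Matrix.diagonal d) := by
  obtain ⟨m, rfl⟩ := Nat.exists_eq_add_of_le' hm
  obtain ⟨M, hM, rfl⟩ := hB
  refine ⟨Function.update M (Fin.last m) (M (Fin.last m) * Matrix.diagonal d), fun k => ?_, ?_⟩
  · rcases eq_or_ne k (Fin.last m) with rfl | hk
    · rw [Function.update_self]; exact (hM _).mul_diagonal d
    · rw [Function.update_of_ne hk]; exact hM k
  · simp only [List.ofFn_succ', List.prod_concat, Function.update_self, mul_assoc,
      Function.update_of_ne (Fin.castSucc_lt_last _).ne]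

noncomputable def twiddleFactor (m p : ℕ) : Matrix (Fin (2 ^ m)) (Fin (2 ^ m)) ℂ :=
  Matrix.of fun i j =>
    if (i : ℕ) / 2 ^ (p + 1) = j / 2 ^ (p + 1) ∧ (i : ℕ) % 2 ^ p = j % 2 ^ p then
      dftRoot (p + 1) ^ (((i : ℕ) + 1) * ((j : ℕ) / 2 ^ p % 2))
    else 0

/-- Block diagonal with `2^q × 2^q` blocks; the blocks are DFTs of size `2^q` with rows shifted by
one and columns in bit-reversed order. -/
noncomputable def blockDFT (m q : ℕ) : Matrix (Fin (2 ^ m)) (Fin (2 ^ m)) ℂ :=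
  Matrix.of fun i j =>
    if (i : ℕ) / 2 ^ q = j / 2 ^ q then dftRoot q ^ (((i : ℕ) + 1) * bitRev q j) else 0

lemma blockDFT_zero (m : ℕ) : blockDFT m 0 = 1 := by
  ext i j
  simp [blockDFT, bitRev_zero_left, Matrix.one_apply, Fin.ext_iff]

lemma blockDFT_self_apply (m : ℕ) (i j : Fin (2 ^ m)) :
    blockDFT m m i j = dftRoot m ^ (((i : ℕ) + 1) * bitRev m j) := by
  simp [blockDFT, Nat.div_eq_of_lt i.isLt, Nat.div_eq_of_lt j.isLt]

lemma isButterflyFactor_twiddleFactor (m k : ℕ) :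
    IsButterflyFactor m k (twiddleFactor m (m - 1 - k)) := fun i j hne hxor => by
  rw [twiddleFactor, Matrix.of_apply, if_neg]
  exact fun h => hxor (Nat.xor_eq_two_pow_of_div_eq_of_mod_eq h.1 h.2 (Fin.val_ne_of_ne hne))

lemma exists_fin_div_eq_mod_eq {m p : ℕ} (hp : p < m) (i j : Fin (2 ^ m)) :
    ∃ l : Fin (2 ^ m), (l : ℕ) / 2 ^ p = j / 2 ^ p ∧ (l : ℕ) % 2 ^ p = i % 2 ^ p := by
  have hpos : 0 < 2 ^ p := by positivity
  have hj : (j : ℕ) / 2 ^ p < 2 ^ (m - p) :=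
    Nat.div_lt_of_lt_mul (by rw [← pow_add, Nat.add_sub_cancel' hp.le]; exact j.isLt)
  refine ⟨⟨2 ^ p * (j / 2 ^ p) + i % 2 ^ p, ?_⟩, ?_, ?_⟩
  · calc 2 ^ p * ((j : ℕ) / 2 ^ p) + (i : ℕ) % 2 ^ p < 2 ^ p * ((j : ℕ) / 2 ^ p + 1) := by
          rw [mul_add_one]; exact Nat.add_lt_add_left (Nat.mod_lt _ hpos) _
      _ ≤ 2 ^ p * 2 ^ (m - p) := Nat.mul_le_mul_left _ hj
      _ = 2 ^ m := by rw [← pow_add, Nat.add_sub_cancel' hp.le]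
  · simp [Nat.add_div_of_dvd_right, Nat.div_eq_of_lt (Nat.mod_lt _ hpos)]
  · simp

lemma twiddleFactor_mul_blockDFT {m p : ℕ} (hp : p < m) :
    twiddleFactor m p * blockDFT m p = blockDFT m (p + 1) := by
  ext i j
  -- the only surviving summand is the `l₀` carrying the low `p` bits of `i` and the rest of `j`
  obtain ⟨l₀, hl₀div, hl₀mod⟩ := exists_fin_div_eq_mod_eq hp i j
  rw [Matrix.mul_apply, Finset.sum_eq_single l₀]
  · have hl₀div_succ : (l₀ : ℕ) / 2 ^ (p + 1) = j / 2 ^ (p + 1) := by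
      rw [pow_succ, ← Nat.div_div_eq_div_mul, hl₀div, Nat.div_div_eq_div_mul]
    have hroot : dftRoot p ^ (((l₀ : ℕ) + 1) * bitRev p j) =
        dftRoot p ^ (((i : ℕ) + 1) * bitRev p j) :=
      dftRoot_pow_congr ((Nat.ModEq.add_right 1 hl₀mod).mul_right _)
    by_cases h : (i : ℕ) / 2 ^ (p + 1) = j / 2 ^ (p + 1)
    · simp only [twiddleFactor, blockDFT, Matrix.of_apply, hl₀div_succ, hl₀mod, h, hl₀div,
        and_self, if_true]
      rw [hroot, bitRev_succ, mul_add, pow_add, mul_left_comm, dftRoot_succ_pow_two_mul]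
    · simp [twiddleFactor, blockDFT, hl₀div_succ, h]
  · intro l _ hl
    simp only [twiddleFactor, blockDFT, Matrix.of_apply]
    split_ifs with htw hbl
    · refine absurd (Fin.ext ?_) hl
      rw [← Nat.div_add_mod l (2 ^ p), ← Nat.div_add_mod l₀ (2 ^ p), hbl, hl₀div, ← htw.2, hl₀mod]
    all_goals simp
  · simp

lemma prod_twiddleFactor {m q : ℕ} (hq : q ≤ m) :
    (List.ofFn fun k : Fin q => twiddleFactor m (q - 1 - k)).prod = blockDFT m q := by
  induction q with
  | zero => simp [blockDFT_zero]
  | succ q ih =>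
    rw [List.ofFn_succ, List.prod_cons]
    simp only [Fin.val_zero, Fin.val_succ, Nat.add_sub_cancel, Nat.sub_zero,
      Nat.sub_add_eq, Nat.sub_right_comm q _ 1]
    rw [ih (by omega), twiddleFactor_mul_blockDFT (by omega)]

lemma isButterflyMatrix_blockDFT (m : ℕ) : IsButterflyMatrix m (blockDFT m m) :=
  ⟨_, fun k => isButterflyFactor_twiddleFactor m k, (prod_twiddleFactor le_rfl).symm⟩

def dstIndex (m n : ℕ) : ℕ := if n % 2 = 0 then n / 2 else 2 ^ m - (n + 1) / 2

lemma dstIndex_lt {m n : ℕ} (hn : n < 2 ^ m) : dstIndex m n < 2 ^ m := by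
  unfold dstIndex; split_ifs <;> omega

lemma dstIndex_injOn {m : ℕ} (hm : 1 ≤ m) : Set.InjOn (dstIndex m) (Set.Iio (2 ^ m)) := by
  intro a ha b hb h
  have : 2 ^ m = 2 * 2 ^ (m - 1) := by rw [← pow_succ', Nat.sub_add_cancel hm]
  simp only [Set.mem_Iio] at ha hb
  unfold dstIndex at h; split_ifs at h <;> omega

noncomputable def dstIndexPerm {m : ℕ} (hm : 1 ≤ m) : Equiv.Perm (Fin (2 ^ m)) :=
  Equiv.ofBijective (fun n => ⟨dstIndex m n, dstIndex_lt n.isLt⟩) <|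
    Finite.injective_iff_bijective.mp fun a b h =>
      Fin.ext (dstIndex_injOn hm a.isLt b.isLt (Fin.val_eq_of_eq h))

noncomputable def dstScale (m k : ℕ) : ℂ :=
  I * exp (-((Real.pi * (k + 1) / 2 ^ (m + 1) : ℝ) * I))

lemma re_I_mul_exp_neg_mul_I (φ : ℝ) : (I * exp (-(φ * I))).re = Real.sin φ := by
  rw [I_mul_re, ← neg_mul, ← ofReal_neg, exp_ofReal_mul_I_im, Real.sin_neg, neg_neg]

lemma re_neg_I_mul_exp_mul_I (φ : ℝ) : (-(I * exp (φ * I))).re = Real.sin φ := by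
  rw [neg_re, I_mul_re, exp_ofReal_mul_I_im, neg_neg]

lemma sin_dst_eq_re {m n : ℕ} (k : ℕ) (hn : n < 2 ^ m) :
    Real.sin (Real.pi * (n + 1 / 2) * (k + 1) / (2 ^ m : ℕ)) =
      (dstScale m k * dftRoot m ^ ((k + 1) * dstIndex m n) * (-1) ^ n).re := by
  set θ : ℝ := Real.pi * (k + 1) / 2 ^ (m + 1) with hθ
  set ζ := exp (-(θ * I)) with hζ
  have hζ_pow : ∀ e : ℕ, ζ ^ e = exp (-((e * θ : ℝ) * I)) := fun e => by
    rw [hζ, ← exp_nat_mul]; push_cast; ring_nf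
  have hroot : dftRoot m ^ (k + 1) = ζ ^ 4 := by
    rw [dftRoot, hζ_pow, ← exp_nat_mul, hθ]
    congr 1
    push_cast
    field_simp
    ring
  have hζ_period : ζ ^ (4 * 2 ^ m) = 1 := by
    rw [pow_mul, ← hroot, ← pow_mul, mul_comm, pow_mul, dftRoot_pow_two_pow, one_pow]
  have hangle : Real.pi * (n + 1 / 2) * (k + 1) / (2 ^ m : ℕ) = (2 * n + 1 : ℕ) * θ := by
    rw [hθ, pow_succ]; push_cast; field_simp
  rw [dstScale, pow_mul, hroot, ← pow_mul, hangle, ← hθ, ← hζ, mul_assoc I, ← pow_succ']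
  rcases Nat.even_or_odd' n with ⟨a, rfl | rfl⟩
  · rw [show dstIndex m (2 * a) = a by simp [dstIndex], show 4 * a + 1 = 2 * (2 * a) + 1 by ring,
      hζ_pow, Even.neg_one_pow ⟨a, two_mul a⟩, mul_one, re_I_mul_exp_neg_mul_I]
  · have hidx : dstIndex m (2 * a + 1) = 2 ^ m - (a + 1) := by simp [dstIndex]; omega
    have hconj : ζ ^ (4 * dstIndex m (2 * a + 1) + 1) =
        exp ((((2 * (2 * a + 1) + 1 : ℕ) * θ : ℝ)) * I) := by
      rw [← inv_inv (exp _), ← exp_neg, ← hζ_pow]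
      refine eq_inv_of_mul_eq_one_left ?_
      rw [← pow_add, ← hζ_period]
      congr 1
      omega
    rw [hconj, Odd.neg_one_pow ⟨a, rfl⟩, mul_neg_one, re_neg_I_mul_exp_mul_I]

/-- **The DST lies in the class (BP)² up to entrywise real part.**  For `N = 2^m`, the DST
matrix `S_{k,n} = sin(π(n+1/2)(k+1)/N)` is the entrywise real part of a product
`B₁·P₁·B₂·P₂` of two BP matrices over `ℂ`. -/
theorem dst_mem_BPBP_re (m : ℕ) (hm : 1 ≤ m) :
    ∃ (B₁ B₂ : Matrix (Fin (2 ^ m)) (Fin (2 ^ m)) ℂ) (σ₁ σ₂ : Equiv.Perm (Fin (2 ^ m))),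
      IsButterflyMatrix m B₁ ∧ IsButterflyMatrix m B₂ ∧
      (Matrix.of fun k n : Fin (2 ^ m) =>
          Real.sin (Real.pi * ((n : ℕ) + 1 / 2) * ((k : ℕ) + 1) / (2 ^ m : ℕ))) =
        (B₁ * σ₁.permMatrix ℂ * B₂ * σ₂.permMatrix ℂ).map Complex.re := by
  set σ := (dstIndexPerm hm).trans (bitRevPerm m)
  set sign : Fin (2 ^ m) → ℂ := fun j => (-1) ^ (σ.symm j : ℕ)
  refine ⟨Matrix.diagonal fun k => dstScale m k, blockDFT m m * Matrix.diagonal sign, 1, σ.symm,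
    by simpa only [one_mul] using (isButterflyMatrix_one (𝔽 := ℂ) m).mul_diagonal hm _,
    (isButterflyMatrix_blockDFT m).mul_diagonal hm sign, ?_⟩
  ext k n
  have hidx : bitRev m (σ n) = dstIndex m n := bitRev_bitRev (dstIndex_lt n.isLt)
  have hsign : sign (σ n) = (-1) ^ (n : ℕ) := by simp only [sign, Equiv.symm_apply_apply]
  rw [Matrix.permMatrix_one, mul_one, Equiv.Perm.permMatrix, PEquiv.mul_toMatrix_toPEquiv]
  simp only [Matrix.of_apply, Matrix.map_apply, Matrix.submatrix_apply, id, Equiv.symm_symm,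
    Matrix.diagonal_mul, Matrix.mul_diagonal, blockDFT_self_apply, hidx, hsign, ← mul_assoc]
  exact sin_dst_eq_re k n.isLt
end
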